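/- arXiv:cs/0506020 — 8 statements merged into one kernel-verified Lean document; each statement's English description precedes it below -/
import Mathlib

section
/- For every fixed real P > 0, the total throughput of the worst-user scheduler converges to P: lim_{N→∞} N · ∫_0^∞ log(1+Px) · N e^{−Nx} dx = P, where the limit is taken along positive integers N → ∞. In particular this throughput is Θ(1) in N. -/
/-!
For `y ≥ 0` we have `y - y ^ 2 / 2 ≤ log (1 + y) ≤ y`. The exponential law of rate `b` has
moments `1 / b` and `2 / b ^ 2`, so the expected rate `E[log (1 + c X)]` lies between
`c / b - (c / b) ^ 2` and `c / b`; multiplying by `b` squeezes the throughput between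
`c - c ^ 2 / b` and `c`.
-/

open Real Set Filter MeasureTheory Topology
open scoped Nat

theorem integrableOn_pow_mul_exp_neg_mul (n : ℕ) {b : ℝ} (hb : 0 < b) :
    IntegrableOn (fun x : ℝ => x ^ n * exp (-b * x)) (Ioi 0) := by
  simpa [rpow_natCast] using
    integrableOn_rpow_mul_exp_neg_mul_rpow (s := n) (p := 1)
      (by linarith [n.cast_nonneg (α := ℝ)]) one_pos hb

theorem integral_pow_mul_exp_neg_mul_Ioi (n : ℕ) {b : ℝ} (hb : 0 < b) :
    ∫ x in Ioi (0 : ℝ), x ^ n * exp (-b * x) = n ! / b ^ (n + 1) := by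
  have h := integral_rpow_mul_exp_neg_mul_Ioi (a := n + 1) (by positivity) hb
  rw [add_sub_cancel_right, Gamma_nat_eq_factorial, ← Nat.cast_succ] at h
  simp only [rpow_natCast] at h
  simp only [neg_mul, h, one_div, inv_pow, Nat.succ_eq_add_one]
  ring

theorem sub_sq_div_two_le_log_one_add {y : ℝ} (hy : 0 ≤ y) : y - y ^ 2 / 2 ≤ log (1 + y) :=
  calc y - y ^ 2 / 2 ≤ 2 * y / (y + 2) := by
        rw [le_div_iff₀ (by positivity)]
        nlinarith [pow_nonneg hy 3]
    _ ≤ log (1 + y) := le_log_one_add_of_nonneg hy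

theorem log_one_add_le_self {y : ℝ} (hy : -1 < y) : log (1 + y) ≤ y := by
  linarith [log_le_sub_one_of_pos (show 0 < 1 + y by linarith)]

section ExponentialExpectation

variable {b c : ℝ}

theorem log_one_add_mul_mul_exp_le (hb : 0 < b) (hc : 0 ≤ c) {x : ℝ} (hx : 0 < x) :
    log (1 + c * x) * (b * exp (-b * x)) ≤ c * b * (x ^ 1 * exp (-b * x)) := by
  have := log_one_add_le_self (show -1 < c * x by nlinarith)
  calc log (1 + c * x) * (b * exp (-b * x)) ≤ c * x * (b * exp (-b * x)) := by gcongr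
    _ = c * b * (x ^ 1 * exp (-b * x)) := by ring

theorem le_log_one_add_mul_mul_exp (hb : 0 < b) (hc : 0 ≤ c) {x : ℝ} (hx : 0 < x) :
    c * b * (x ^ 1 * exp (-b * x)) - c ^ 2 * b / 2 * (x ^ 2 * exp (-b * x)) ≤
      log (1 + c * x) * (b * exp (-b * x)) := by
  have := sub_sq_div_two_le_log_one_add (show 0 ≤ c * x by positivity)
  calc c * b * (x ^ 1 * exp (-b * x)) - c ^ 2 * b / 2 * (x ^ 2 * exp (-b * x))
      = (c * x - (c * x) ^ 2 / 2) * (b * exp (-b * x)) := by ring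
    _ ≤ log (1 + c * x) * (b * exp (-b * x)) := by gcongr

theorem integrableOn_log_one_add_mul_mul_exp (hb : 0 < b) (hc : 0 ≤ c) :
    IntegrableOn (fun x => log (1 + c * x) * (b * exp (-b * x))) (Ioi 0) := by
  refine integrable_of_le_of_le (by fun_prop)
    ((ae_restrict_iff' measurableSet_Ioi).2 (.of_forall fun x hx =>
      le_log_one_add_mul_mul_exp hb hc hx))
    ((ae_restrict_iff' measurableSet_Ioi).2 (.of_forall fun x hx =>
      log_one_add_mul_mul_exp_le hb hc hx)) ?_ ?_
  · exact ((integrableOn_pow_mul_exp_neg_mul 1 hb).const_mul _).sub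
      ((integrableOn_pow_mul_exp_neg_mul 2 hb).const_mul _)
  · exact (integrableOn_pow_mul_exp_neg_mul 1 hb).const_mul _

theorem integral_log_one_add_mul_mul_exp_le (hb : 0 < b) (hc : 0 ≤ c) :
    ∫ x in Ioi (0 : ℝ), log (1 + c * x) * (b * exp (-b * x)) ≤ c / b := by
  calc ∫ x in Ioi (0 : ℝ), log (1 + c * x) * (b * exp (-b * x))
      ≤ ∫ x in Ioi (0 : ℝ), c * b * (x ^ 1 * exp (-b * x)) :=
        setIntegral_mono_on (integrableOn_log_one_add_mul_mul_exp hb hc)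
          ((integrableOn_pow_mul_exp_neg_mul 1 hb).const_mul _) measurableSet_Ioi
          fun x hx => log_one_add_mul_mul_exp_le hb hc hx
    _ = c / b := by
        rw [integral_const_mul, integral_pow_mul_exp_neg_mul_Ioi 1 hb]
        norm_num
        field_simp

theorem le_integral_log_one_add_mul_mul_exp (hb : 0 < b) (hc : 0 ≤ c) :
    c / b - (c / b) ^ 2 ≤ ∫ x in Ioi (0 : ℝ), log (1 + c * x) * (b * exp (-b * x)) := by
  have hint₁ := (integrableOn_pow_mul_exp_neg_mul 1 hb).const_mul (c * b)
  have hint₂ := (integrableOn_pow_mul_exp_neg_mul 2 hb).const_mul (c ^ 2 * b / 2)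
  calc c / b - (c / b) ^ 2
      = ∫ x in Ioi (0 : ℝ),
          c * b * (x ^ 1 * exp (-b * x)) - c ^ 2 * b / 2 * (x ^ 2 * exp (-b * x)) := by
        rw [integral_sub hint₁ hint₂, integral_const_mul, integral_const_mul,
          integral_pow_mul_exp_neg_mul_Ioi 1 hb, integral_pow_mul_exp_neg_mul_Ioi 2 hb]
        norm_num
        field_simp
    _ ≤ ∫ x in Ioi (0 : ℝ), log (1 + c * x) * (b * exp (-b * x)) :=
        setIntegral_mono_on (IntegrableOn.sub hint₁ hint₂)
          (integrableOn_log_one_add_mul_mul_exp hb hc) measurableSet_Ioi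
          fun x hx => le_log_one_add_mul_mul_exp hb hc hx

theorem tendsto_mul_integral_log_one_add_mul_mul_exp (hc : 0 ≤ c) :
    Tendsto (fun b => b * ∫ x in Ioi (0 : ℝ), log (1 + c * x) * (b * exp (-b * x)))
      atTop (𝓝 c) := by
  have hlower : Tendsto (fun b => c - c ^ 2 * b⁻¹) atTop (𝓝 c) := by
    simpa using tendsto_const_nhds.sub (tendsto_inv_atTop_zero.const_mul (c ^ 2))
  refine tendsto_of_tendsto_of_tendsto_of_le_of_le' hlower tendsto_const_nhds ?_ ?_
  · filter_upwards [eventually_gt_atTop 0] with b hb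
    calc c - c ^ 2 * b⁻¹ = b * (c / b - (c / b) ^ 2) := by field_simp
      _ ≤ _ := mul_le_mul_of_nonneg_left (le_integral_log_one_add_mul_mul_exp hb hc) hb.le
  · filter_upwards [eventually_gt_atTop 0] with b hb
    calc _ ≤ b * (c / b) :=
          mul_le_mul_of_nonneg_left (integral_log_one_add_mul_mul_exp_le hb hc) hb.le
      _ = c := by field_simp

end ExponentialExpectation

/-- For every fixed `P > 0`, the total throughput of the worst-user scheduler converges
to `P`: `lim_{N→∞} N · ∫_0^∞ log(1+Px) · N e^{−Nx} dx = P`, the limit taken along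
positive integers `N → ∞`. In particular this throughput is `Θ(1)` in `N`. -/
theorem worst_user_throughput_tendsto (P : ℝ) (hP : 0 < P) :
    Tendsto (fun N : ℕ =>
        (N : ℝ) * ∫ x in Ioi (0 : ℝ),
          Real.log (1 + P * x) * ((N : ℝ) * Real.exp (-(N : ℝ) * x)))
      atTop (nhds P) :=
  (tendsto_mul_integral_log_one_add_mul_mul_exp hP.le).comp tendsto_natCast_atTop_atTop
end

section
/- For every fixed real P > 0 there exist constants 0 < c₁ ≤ c₂ and N₀ such that for all integers N ≥ N₀: c₁ · log log N ≤ ∫_0^∞ log(1+Px) · N e^{−x}(1−e^{−x})^{N−1} dx ≤ c₂ · log log N. That is, the expected rate to the best of N users, E[log(1+P·max_{i≤N} X_i)] with X_i i.i.d. unit-mean exponential, scales as Θ(log log N). -/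
/-!
Write `L = log N`. The maximum exceeds `L` with probability `1 - (1 - 1/N)^N ≥ 1 - e⁻¹`, and on
that event `log (1 + P x) ≥ log (1 + P L) = log L + O(1)`: this is the lower bound. For the
upper bound split at `T = 2L`: below `T` the logarithm is at most `log (1 + 2 P L) = log L + O(1)`,
and above `T` the integrand is at most `P N x e^{-x}`, whose tail integral
`P N (T + 1) e^{-T} = P (2L + 1) / N` is bounded by `2P`.
-/

open Real Set MeasureTheory Filter Topology

noncomputable def maxExpDensity (N : ℕ) (x : ℝ) : ℝ := N * exp (-x) * (1 - exp (-x)) ^ (N - 1)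

lemma hasDerivAt_one_sub_exp_neg_pow (N : ℕ) (x : ℝ) :
    HasDerivAt (fun y => (1 - exp (-y)) ^ N) (maxExpDensity N x) x := by
  refine ((((hasDerivAt_neg x).exp).const_sub 1).fun_pow N).congr_deriv ?_
  rw [maxExpDensity]
  ring

lemma maxExpDensity_nonneg (N : ℕ) {x : ℝ} (hx : 0 ≤ x) : 0 ≤ maxExpDensity N x := by
  have : 0 ≤ 1 - exp (-x) := sub_nonneg.mpr (exp_le_one_iff.mpr (neg_nonpos.mpr hx))
  unfold maxExpDensity
  positivity

lemma maxExpDensity_le (N : ℕ) {x : ℝ} (hx : 0 ≤ x) : maxExpDensity N x ≤ N * exp (-x) := by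
  have h1 : exp (-x) ≤ 1 := exp_le_one_iff.mpr (neg_nonpos.mpr hx)
  calc maxExpDensity N x ≤ N * exp (-x) * 1 := by
        unfold maxExpDensity
        gcongr
        exact pow_le_one₀ (sub_nonneg.mpr h1) (sub_le_self _ (exp_pos _).le)
    _ = N * exp (-x) := mul_one _

lemma integrableOn_maxExpDensity (N : ℕ) {a : ℝ} (ha : 0 ≤ a) :
    IntegrableOn (maxExpDensity N) (Ioi a) :=
  integrableOn_Ioi_deriv_of_nonneg' (fun x _ => hasDerivAt_one_sub_exp_neg_pow N x)
    (fun _ hx => maxExpDensity_nonneg N (ha.trans hx.out.le))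
    ((tendsto_const_nhds.sub tendsto_exp_neg_atTop_nhds_zero).pow N)

lemma integral_Ioi_maxExpDensity (N : ℕ) {a : ℝ} (ha : 0 ≤ a) :
    ∫ x in Ioi a, maxExpDensity N x = 1 - (1 - exp (-a)) ^ N := by
  have h := integral_Ioi_of_hasDerivAt_of_nonneg' (fun x _ => hasDerivAt_one_sub_exp_neg_pow N x)
    (fun _ hx => maxExpDensity_nonneg N (ha.trans hx.out.le))
    ((tendsto_const_nhds.sub tendsto_exp_neg_atTop_nhds_zero).pow N)
  rwa [sub_zero, one_pow] at h

lemma hasDerivAt_neg_add_one_mul_exp_neg (x : ℝ) :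
    HasDerivAt (fun y => -((y + 1) * exp (-y))) (x * exp (-x)) x := by
  refine (((hasDerivAt_id' x).add_const 1).mul (hasDerivAt_neg x).exp).neg.congr_deriv ?_
  ring

lemma tendsto_neg_add_one_mul_exp_neg :
    Tendsto (fun y : ℝ => -((y + 1) * exp (-y))) atTop (𝓝 0) := by
  have h := ((tendsto_pow_mul_exp_neg_atTop_nhds_zero 1).add
    tendsto_exp_neg_atTop_nhds_zero).neg
  simp only [pow_one, add_zero, neg_zero] at h
  exact h.congr fun y => by ring

lemma integrableOn_mul_exp_neg {a : ℝ} (ha : 0 ≤ a) :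
    IntegrableOn (fun x => x * exp (-x)) (Ioi a) :=
  integrableOn_Ioi_deriv_of_nonneg' (fun x _ => hasDerivAt_neg_add_one_mul_exp_neg x)
    (fun _ hx => mul_nonneg (ha.trans hx.out.le) (exp_pos _).le)
    tendsto_neg_add_one_mul_exp_neg

lemma integral_Ioi_mul_exp_neg {a : ℝ} (ha : 0 ≤ a) :
    ∫ x in Ioi a, x * exp (-x) = (a + 1) * exp (-a) := by
  rw [integral_Ioi_of_hasDerivAt_of_nonneg' (fun x _ => hasDerivAt_neg_add_one_mul_exp_neg x)
    (fun _ hx => mul_nonneg (ha.trans hx.out.le) (exp_pos _).le)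
    tendsto_neg_add_one_mul_exp_neg]
  ring

lemma setIntegral_maxExpDensity_le_one (N : ℕ) {s : Set ℝ} (hs : s ⊆ Ioi 0) :
    ∫ x in s, maxExpDensity N x ≤ 1 := calc
  ∫ x in s, maxExpDensity N x ≤ ∫ x in Ioi 0, maxExpDensity N x := by
    refine setIntegral_mono_set (integrableOn_maxExpDensity N le_rfl) ?_ hs.eventuallyLE
    filter_upwards [ae_restrict_mem measurableSet_Ioi] with x hx
    exact maxExpDensity_nonneg N hx.out.le
  _ ≤ 1 := by
    rw [integral_Ioi_maxExpDensity N le_rfl, neg_zero, exp_zero, sub_self]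
    exact sub_le_self _ (pow_nonneg le_rfl N)

lemma tendsto_log_log_natCast : Tendsto (fun N : ℕ => log (log N)) atTop atTop :=
  (tendsto_log_atTop.comp tendsto_log_atTop).comp tendsto_natCast_atTop_atTop

section BestUserRate

variable {P : ℝ}

noncomputable def bestUserRate (P : ℝ) (N : ℕ) : ℝ :=
  ∫ x in Ioi 0, log (1 + P * x) * maxExpDensity N x

lemma log_one_add_mul_nonneg (hP : 0 ≤ P) {x : ℝ} (hx : 0 ≤ x) : 0 ≤ log (1 + P * x) :=
  log_nonneg (by nlinarith)

lemma log_one_add_mul_mul_maxExpDensity_nonneg (hP : 0 ≤ P) (N : ℕ) {x : ℝ} (hx : 0 ≤ x) :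
    0 ≤ log (1 + P * x) * maxExpDensity N x :=
  mul_nonneg (log_one_add_mul_nonneg hP hx) (maxExpDensity_nonneg N hx)

lemma log_one_add_mul_mul_maxExpDensity_le (hP : 0 ≤ P) (N : ℕ) {x : ℝ} (hx : 0 ≤ x) :
    log (1 + P * x) * maxExpDensity N x ≤ P * N * (x * exp (-x)) := by
  have hlog : log (1 + P * x) ≤ P * x := by
    linarith [log_le_sub_one_of_pos (show 0 < 1 + P * x by nlinarith)]
  calc log (1 + P * x) * maxExpDensity N x ≤ P * x * (N * exp (-x)) :=
        mul_le_mul hlog (maxExpDensity_le N hx) (maxExpDensity_nonneg N hx) (by positivity)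
    _ = P * N * (x * exp (-x)) := by ring

lemma integrableOn_log_one_add_mul_mul_maxExpDensity (hP : 0 ≤ P) (N : ℕ) {a : ℝ}
    (ha : 0 ≤ a) :
    IntegrableOn (fun x => log (1 + P * x) * maxExpDensity N x) (Ioi a) := by
  refine ((integrableOn_mul_exp_neg ha).const_mul (P * N)).mono' ?_ ?_
  · exact (measurable_log.comp (by fun_prop)).mul
      (by unfold maxExpDensity; fun_prop) |>.aestronglyMeasurable
  · filter_upwards [ae_restrict_mem measurableSet_Ioi] with x hx
    have hx0 : 0 ≤ x := ha.trans hx.out.le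
    rw [norm_of_nonneg (log_one_add_mul_mul_maxExpDensity_nonneg hP N hx0)]
    exact log_one_add_mul_mul_maxExpDensity_le hP N hx0

lemma log_one_add_mul_mul_tail_le_bestUserRate (hP : 0 ≤ P) (N : ℕ) {a : ℝ} (ha : 0 ≤ a) :
    log (1 + P * a) * (1 - (1 - exp (-a)) ^ N) ≤ bestUserRate P N := by
  have hint {c : ℝ} (hc : 0 ≤ c) := integrableOn_log_one_add_mul_mul_maxExpDensity hP N hc
  calc log (1 + P * a) * (1 - (1 - exp (-a)) ^ N)
      = ∫ x in Ioi a, log (1 + P * a) * maxExpDensity N x := by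
        rw [integral_const_mul, integral_Ioi_maxExpDensity N ha]
    _ ≤ ∫ x in Ioi a, log (1 + P * x) * maxExpDensity N x := by
        refine setIntegral_mono_on ((integrableOn_maxExpDensity N ha).const_mul _) (hint ha)
          measurableSet_Ioi fun x hx => ?_
        have hax : a ≤ x := hx.out.le
        exact mul_le_mul_of_nonneg_right (log_le_log (by nlinarith) (by nlinarith))
          (maxExpDensity_nonneg N (ha.trans hax))
    _ ≤ bestUserRate P N := by
        refine setIntegral_mono_set (hint le_rfl) ?_ (Ioi_subset_Ioi ha).eventuallyLE
        filter_upwards [ae_restrict_mem measurableSet_Ioi] with x hx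
        exact log_one_add_mul_mul_maxExpDensity_nonneg hP N hx.out.le

lemma bestUserRate_le (hP : 0 ≤ P) (N : ℕ) {T : ℝ} (hT : 0 ≤ T) :
    bestUserRate P N ≤ log (1 + P * T) + P * N * ((T + 1) * exp (-T)) := by
  have hint {c : ℝ} (hc : 0 ≤ c) := integrableOn_log_one_add_mul_mul_maxExpDensity hP N hc
  have hbody : ∫ x in Ioc 0 T, log (1 + P * x) * maxExpDensity N x ≤ log (1 + P * T) := calc
    _ ≤ ∫ x in Ioc 0 T, log (1 + P * T) * maxExpDensity N x := by
        refine setIntegral_mono_on ((hint le_rfl).mono_set Ioc_subset_Ioi_self)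
          (((integrableOn_maxExpDensity N le_rfl).mono_set Ioc_subset_Ioi_self).const_mul _)
          measurableSet_Ioc fun x hx => ?_
        exact mul_le_mul_of_nonneg_right (log_le_log (by nlinarith [hx.1]) (by nlinarith [hx.2]))
          (maxExpDensity_nonneg N hx.1.le)
    _ = log (1 + P * T) * ∫ x in Ioc 0 T, maxExpDensity N x := integral_const_mul _ _
    _ ≤ log (1 + P * T) * 1 := mul_le_mul_of_nonneg_left
        (setIntegral_maxExpDensity_le_one N Ioc_subset_Ioi_self) (log_one_add_mul_nonneg hP hT)
    _ = log (1 + P * T) := mul_one _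
  have htail : ∫ x in Ioi T, log (1 + P * x) * maxExpDensity N x
      ≤ P * N * ((T + 1) * exp (-T)) := by
    rw [← integral_Ioi_mul_exp_neg hT, ← integral_const_mul]
    exact setIntegral_mono_on (hint hT) ((integrableOn_mul_exp_neg hT).const_mul _)
      measurableSet_Ioi fun x hx => log_one_add_mul_mul_maxExpDensity_le hP N (hT.trans hx.out.le)
  rw [bestUserRate, ← Ioc_union_Ioi_eq_Ioi hT, setIntegral_union (Ioc_disjoint_Ioi le_rfl)
    measurableSet_Ioi ((hint le_rfl).mono_set Ioc_subset_Ioi_self) (hint hT)]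
  exact add_le_add hbody htail

lemma one_sub_exp_neg_one_mul_le_bestUserRate (hP : 0 ≤ P) {N : ℕ} (hN : 1 ≤ N) :
    (1 - exp (-1)) * log (1 + P * log N) ≤ bestUserRate P N := by
  have hN0 : (0 : ℝ) < N := by exact_mod_cast hN
  have hpow : (1 - exp (-log N)) ^ N ≤ exp (-1) := by
    rw [exp_neg, exp_log hN0, ← one_div]
    exact one_sub_div_pow_le_exp_neg (by exact_mod_cast hN)
  calc (1 - exp (-1)) * log (1 + P * log N)
      ≤ log (1 + P * log N) * (1 - (1 - exp (-log N)) ^ N) := by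
        rw [mul_comm]
        exact mul_le_mul_of_nonneg_left (by linarith)
          (log_one_add_mul_nonneg hP (log_natCast_nonneg N))
    _ ≤ bestUserRate P N :=
        log_one_add_mul_mul_tail_le_bestUserRate hP N (log_natCast_nonneg N)

lemma bestUserRate_le_log_one_add_two_mul_log_add (hP : 0 ≤ P) {N : ℕ} (hN : 1 ≤ N) :
    bestUserRate P N ≤ log (1 + 2 * P * log N) + 2 * P := by
  have hN0 : (0 : ℝ) < N := by exact_mod_cast hN
  have hlog : log N ≤ N - 1 := log_le_sub_one_of_pos hN0
  have htail : P * N * ((2 * log N + 1) * exp (-(2 * log N))) ≤ 2 * P := by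
    rw [exp_neg, two_mul, exp_add, exp_log hN0]
    have : (2 * log N + 1) / N ≤ 2 := by rw [div_le_iff₀ hN0]; linarith
    calc P * N * ((log N + log N + 1) * (N * N : ℝ)⁻¹) = P * ((2 * log N + 1) / N) := by
          field_simp; ring
      _ ≤ P * 2 := mul_le_mul_of_nonneg_left this hP
      _ = 2 * P := mul_comm _ _
  calc bestUserRate P N
      ≤ log (1 + P * (2 * log N)) + P * N * ((2 * log N + 1) * exp (-(2 * log N))) :=
        bestUserRate_le hP N (by positivity)
    _ ≤ log (1 + 2 * P * log N) + 2 * P := by rw [← mul_assoc, mul_comm P 2]; linarith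

lemma eventually_loglog_le_bestUserRate (hP : 0 < P) :
    ∀ᶠ N : ℕ in atTop, (1 - exp (-1)) / 2 * log (log N) ≤ bestUserRate P N := by
  filter_upwards [tendsto_log_log_natCast.eventually_ge_atTop (-2 * log P),
    eventually_ge_atTop 2] with N hll hN
  have hL : 0 < log N := log_pos (by exact_mod_cast hN)
  have hhalf : log (log N) / 2 ≤ log (1 + P * log N) := calc
    log (log N) / 2 ≤ log P + log (log N) := by linarith
    _ = log (P * log N) := (log_mul hP.ne' hL.ne').symm
    _ ≤ log (1 + P * log N) := log_le_log (by positivity) (by linarith)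
  have hc : 0 < 1 - exp (-1) := sub_pos.mpr (exp_lt_one_iff.mpr (by norm_num))
  calc (1 - exp (-1)) / 2 * log (log N) = (1 - exp (-1)) * (log (log N) / 2) := by ring
    _ ≤ (1 - exp (-1)) * log (1 + P * log N) := mul_le_mul_of_nonneg_left hhalf hc.le
    _ ≤ bestUserRate P N := one_sub_exp_neg_one_mul_le_bestUserRate hP.le (by omega)

lemma eventually_bestUserRate_le_loglog (hP : 0 ≤ P) :
    ∀ᶠ N : ℕ in atTop, bestUserRate P N ≤ 3 * log (log N) := by
  filter_upwards [tendsto_log_log_natCast.eventually_ge_atTop (log (1 + 2 * P)),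
    tendsto_log_log_natCast.eventually_ge_atTop (2 * P),
    (tendsto_log_atTop.comp tendsto_natCast_atTop_atTop).eventually_ge_atTop 1,
    eventually_ge_atTop 1] with N hll₁ hll₂ (hL : 1 ≤ log N) hN
  have hrate : log (1 + 2 * P * log N) ≤ log (1 + 2 * P) + log (log N) := calc
    log (1 + 2 * P * log N) ≤ log ((1 + 2 * P) * log N) :=
      log_le_log (by positivity) (by nlinarith)
    _ = log (1 + 2 * P) + log (log N) := log_mul (by positivity) (by positivity)
  linarith [bestUserRate_le_log_one_add_two_mul_log_add hP hN]

end BestUserRate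

/-- For every fixed `P > 0` there are constants `0 < c₁ ≤ c₂` and `N₀` such that for all
`N ≥ N₀`, `c₁ log log N ≤ ∫_0^∞ log(1+Px) · N e^{−x}(1−e^{−x})^{N−1} dx ≤ c₂ log log N`:
the expected rate to the best of `N` i.i.d. unit-mean exponential users is
`Θ(log log N)`. -/
theorem best_user_rate_theta (P : ℝ) (hP : 0 < P) :
    ∃ c₁ c₂ : ℝ, ∃ N₀ : ℕ, 0 < c₁ ∧ c₁ ≤ c₂ ∧
      ∀ N : ℕ, N₀ ≤ N →
        c₁ * Real.log (Real.log N) ≤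
            (∫ x in Ioi (0 : ℝ), Real.log (1 + P * x) *
              ((N : ℝ) * Real.exp (-x) * (1 - Real.exp (-x)) ^ (N - 1))) ∧
          (∫ x in Ioi (0 : ℝ), Real.log (1 + P * x) *
              ((N : ℝ) * Real.exp (-x) * (1 - Real.exp (-x)) ^ (N - 1))) ≤
            c₂ * Real.log (Real.log N) := by
  obtain ⟨N₀, hN₀⟩ := eventually_atTop.mp
    ((eventually_loglog_le_bestUserRate hP).and (eventually_bestUserRate_le_loglog hP.le))
  have hc : 0 < 1 - exp (-1) := sub_pos.mpr (exp_lt_one_iff.mpr (by norm_num))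
  exact ⟨(1 - exp (-1)) / 2, 3, N₀, by positivity, by linarith [exp_pos (-1)], hN₀⟩
end

section
/- For every fixed real P > 0 there exist constants 0 < c₁ ≤ c₂ such that for all integers n ≥ 1 (writing N = 2n for the number of users): c₁ ≤ ((2n)! / (n! · (n−1)!)) · ∫_0^∞ log(1+Px) (1−e^{−x})^n e^{−nx} dx ≤ c₂. Consequently the total throughput of the median-user scheduler, which equals n times this integral expression, is Θ(N) in the number of users N, the optimal throughput scaling law. -/
/-!
Write `B(a, b) = ∫₀^∞ (1 - e^{-x})^a e^{-bx} dx = a! / (b (b + 1) ⋯ (b + a))`; the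
normalising constant `(2n)!/(n!(n-1)!)` is exactly `1 / B(n, n)`. For the lower bound,
`log(1 + P x) ≥ log(1 + P) (1 - e^{-x})` raises `a` by one, which costs the factor
`(n + 1)/(2n + 1) ≥ 1/2`. For the upper bound, `log(1 + P x) ≤ P x ≤ 2P e^{x/2}` lowers `b` by
`1/2`, and `B(n, n - 1/2) = (2n + 1/2)/(n - 1/2) · B(n, n + 1/2) ≤ 5 B(n, n)`.
-/

open Real Set MeasureTheory Finset
open scoped Nat

/-- The substitution `u = e^{-x}` turns this into the Beta integral `B(b, a + 1)`. -/
noncomputable def expBeta (a : ℕ) (b : ℝ) : ℝ :=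
  ∫ x in Ioi (0 : ℝ), (1 - exp (-x)) ^ a * exp (-b * x)

lemma prod_range_succ_add_eq_mul {R : Type*} [CommSemiring R] (b : R) (a : ℕ) :
    ∏ j ∈ range (a + 1), (b + j) = b * ∏ j ∈ range a, (b + 1 + j) := by
  rw [prod_range_succ', mul_comm]
  push_cast
  simp [add_assoc, add_comm (1 : R)]

section ExpBeta

variable {b : ℝ}

lemma integrableOn_one_sub_exp_neg_pow_mul_exp (a : ℕ) (hb : 0 < b) :
    IntegrableOn (fun x => (1 - exp (-x)) ^ a * exp (-b * x)) (Ioi 0) := by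
  refine (integrableOn_exp_mul_Ioi (neg_neg_of_pos hb) 0).mono' (by fun_prop) ?_
  filter_upwards [ae_restrict_mem measurableSet_Ioi] with x (hx : 0 < x)
  have h₀ : 0 ≤ 1 - exp (-x) := by simp [hx.le]
  have h₁ : 1 - exp (-x) ≤ 1 := by linarith [exp_pos (-x)]
  rw [norm_mul, norm_pow, Real.norm_of_nonneg h₀, Real.norm_of_nonneg (exp_pos _).le]
  exact mul_le_of_le_one_left (exp_pos _).le (pow_le_one₀ h₀ h₁)

lemma expBeta_zero (hb : 0 < b) : expBeta 0 b = 1 / b := by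
  rw [expBeta]
  simp only [pow_zero, one_mul]
  rw [integral_exp_mul_Ioi (neg_neg_of_pos hb)]
  simp

lemma expBeta_succ (a : ℕ) (hb : 0 < b) :
    expBeta (a + 1) b = expBeta a b - expBeta a (b + 1) := by
  rw [expBeta, expBeta, expBeta, ← integral_sub (integrableOn_one_sub_exp_neg_pow_mul_exp a hb)
    (integrableOn_one_sub_exp_neg_pow_mul_exp a (by linarith))]
  congr 1 with x
  rw [show -(b + 1) * x = -b * x + -x by ring, exp_add]
  ring

lemma expBeta_eq (a : ℕ) (hb : 0 < b) :
    expBeta a b = a ! / ∏ j ∈ range (a + 1), (b + j) := by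
  induction a generalizing b with
  | zero => simp [expBeta_zero hb]
  | succ a ih =>
    have hQ : 0 < ∏ j ∈ range a, (b + 1 + j) := prod_pos fun j _ => by positivity
    rw [expBeta_succ a hb, ih hb, ih (by linarith), prod_range_succ_add_eq_mul b (a + 1),
      prod_range_succ_add_eq_mul b a, prod_range_succ, Nat.factorial_succ]
    push_cast
    field_simp
    ring

lemma expBeta_succ_eq_mul (a : ℕ) (hb : 0 < b) :
    expBeta (a + 1) b = (a + 1) / (b + a + 1) * expBeta a b := by
  have hQ : 0 < ∏ j ∈ range (a + 1), (b + j) := prod_pos fun j _ => by positivity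
  rw [expBeta_eq _ hb, expBeta_eq _ hb, prod_range_succ _ (a + 1), Nat.factorial_succ]
  push_cast
  field_simp
  ring

lemma expBeta_eq_mul_expBeta_add_one (a : ℕ) (hb : 0 < b) :
    expBeta a b = (b + a + 1) / b * expBeta a (b + 1) := by
  have hQ : 0 < ∏ j ∈ range a, (b + 1 + j) := prod_pos fun j _ => by positivity
  rw [expBeta_eq _ hb, expBeta_eq _ (by linarith), prod_range_succ_add_eq_mul, prod_range_succ]
  field_simp
  ring

lemma expBeta_nonneg (a : ℕ) (b : ℝ) : 0 ≤ expBeta a b :=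
  setIntegral_nonneg measurableSet_Ioi fun x (hx : 0 < x) => by
    have h₀ : 0 ≤ 1 - exp (-x) := by simp [hx.le]
    positivity

lemma expBeta_le_expBeta_of_le (a : ℕ) {c : ℝ} (hb : 0 < b) (hbc : b ≤ c) :
    expBeta a c ≤ expBeta a b := by
  refine setIntegral_mono_on (integrableOn_one_sub_exp_neg_pow_mul_exp a (hb.trans_le hbc))
    (integrableOn_one_sub_exp_neg_pow_mul_exp a hb) measurableSet_Ioi fun x (hx : 0 < x) => ?_
  have h₀ : 0 ≤ 1 - exp (-x) := by simp [hx.le]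
  gcongr

end ExpBeta

noncomputable def medianDensityConst (n : ℕ) : ℝ :=
  ((2 * n)! : ℝ) / ((n ! : ℝ) * ((n - 1)! : ℝ))

lemma medianDensityConst_mul_expBeta {n : ℕ} (hn : 1 ≤ n) :
    medianDensityConst n * expBeta n n = 1 := by
  have hprod : ∏ j ∈ range (n + 1), ((n : ℝ) + j) = ((n - 1)! : ℝ)⁻¹ * (2 * n)! := by
    have := Nat.factorial_mul_ascFactorial' n (n + 1) hn
    rw [Nat.ascFactorial_eq_prod_range, show n + (n + 1) - 1 = 2 * n by omega] at this
    rw [← this]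
    push_cast
    field_simp
  rw [medianDensityConst, expBeta_eq n (by positivity), hprod]
  field_simp

/-- `E[log(1 + P X)]` for `X` the median gain. -/
noncomputable def medianRate (P : ℝ) (n : ℕ) : ℝ :=
  medianDensityConst n *
    ∫ x in Ioi (0 : ℝ), log (1 + P * x) * (1 - exp (-x)) ^ n * exp (-(n : ℝ) * x)

section Pointwise

variable {P x : ℝ}

lemma log_one_add_mul_le (hP : 0 ≤ P) (hx : 0 ≤ x) :
    log (1 + P * x) ≤ 2 * P * exp (x / 2) := by
  have hx₂ : x ≤ 2 * exp (x / 2) := by linarith [add_one_le_exp (x / 2)]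
  calc log (1 + P * x) ≤ P * x := by
        linarith [log_le_sub_one_of_pos (by positivity : 0 < 1 + P * x)]
    _ ≤ 2 * P * exp (x / 2) := by nlinarith

lemma log_one_add_mul_one_sub_exp_neg_le (hP : 0 ≤ P) (hx : 0 ≤ x) :
    log (1 + P) * (1 - exp (-x)) ≤ log (1 + P * x) := by
  have hlog : 0 ≤ log (1 + P) := log_nonneg (by linarith)
  rcases le_total x 1 with hx₁ | hx₁
  · have hbern : x * log (1 + P) ≤ log (1 + P * x) := by
      rw [← log_rpow (by linarith)]
      refine log_le_log (by positivity) ?_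
      linarith [rpow_one_add_le_one_add_mul_self (by linarith : -1 ≤ P) hx hx₁]
    nlinarith [add_one_le_exp (-x)]
  · have : log (1 + P) ≤ log (1 + P * x) := log_le_log (by linarith) (by nlinarith)
    nlinarith [exp_pos (-x)]

end Pointwise

section MedianRate

variable {P : ℝ} {n : ℕ}

lemma medianRate_integrand_le (hP : 0 ≤ P) {x : ℝ} (hx : 0 ≤ x) :
    log (1 + P * x) * (1 - exp (-x)) ^ n * exp (-(n : ℝ) * x) ≤
      2 * P * ((1 - exp (-x)) ^ n * exp (-(n - 1 / 2 : ℝ) * x)) := by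
  have h₀ : 0 ≤ 1 - exp (-x) := by simp [hx]
  calc log (1 + P * x) * (1 - exp (-x)) ^ n * exp (-(n : ℝ) * x)
      ≤ 2 * P * exp (x / 2) * (1 - exp (-x)) ^ n * exp (-(n : ℝ) * x) := by
        gcongr; exact log_one_add_mul_le hP hx
    _ = 2 * P * ((1 - exp (-x)) ^ n * exp (-(n - 1 / 2 : ℝ) * x)) := by
        rw [show -(n - 1 / 2 : ℝ) * x = x / 2 + -(n : ℝ) * x by ring, exp_add]; ring

lemma integrableOn_medianRate_integrand (hP : 0 ≤ P) (hn : 1 ≤ n) :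
    IntegrableOn (fun x => log (1 + P * x) * (1 - exp (-x)) ^ n * exp (-(n : ℝ) * x))
      (Ioi 0) := by
  have hb : (0 : ℝ) < n - 1 / 2 := by
    have : (1 : ℝ) ≤ n := by exact_mod_cast hn
    linarith
  refine ((integrableOn_one_sub_exp_neg_pow_mul_exp n hb).const_mul (2 * P)).mono'
    (by fun_prop) ?_
  filter_upwards [ae_restrict_mem measurableSet_Ioi] with x (hx : 0 < x)
  have h₀ : 0 ≤ 1 - exp (-x) := by simp [hx.le]
  rw [Real.norm_of_nonneg (by have := log_nonneg (by nlinarith : 1 ≤ 1 + P * x); positivity)]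
  exact medianRate_integrand_le hP hx.le

lemma medianDensityConst_pos : 0 < medianDensityConst n := by
  unfold medianDensityConst; positivity

lemma half_log_one_add_le_medianRate (hP : 0 ≤ P) (hn : 1 ≤ n) :
    log (1 + P) / 2 ≤ medianRate P n := by
  have hn' : (0 : ℝ) < n := by exact_mod_cast hn
  have hlog : 0 ≤ log (1 + P) := log_nonneg (by linarith)
  have hmono : log (1 + P) * expBeta (n + 1) n ≤
      ∫ x in Ioi (0 : ℝ), log (1 + P * x) * (1 - exp (-x)) ^ n * exp (-(n : ℝ) * x) := by
    rw [expBeta, ← integral_const_mul]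
    refine setIntegral_mono_on
      ((integrableOn_one_sub_exp_neg_pow_mul_exp _ hn').const_mul _)
      (integrableOn_medianRate_integrand hP hn) measurableSet_Ioi fun x (hx : 0 < x) => ?_
    have h₀ : 0 ≤ 1 - exp (-x) := by simp [hx.le]
    calc log (1 + P) * ((1 - exp (-x)) ^ (n + 1) * exp (-(n : ℝ) * x))
        = log (1 + P) * (1 - exp (-x)) * (1 - exp (-x)) ^ n * exp (-(n : ℝ) * x) := by ring
      _ ≤ _ := by gcongr; exact log_one_add_mul_one_sub_exp_neg_le hP hx.le
  calc log (1 + P) / 2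
      ≤ log (1 + P) * ((n + 1) / (n + n + 1)) * (medianDensityConst n * expBeta n n) := by
        rw [medianDensityConst_mul_expBeta hn, mul_one, div_eq_mul_one_div]
        refine mul_le_mul_of_nonneg_left ?_ hlog
        rw [div_le_div_iff₀ two_pos (by positivity)]
        linarith
    _ = medianDensityConst n * (log (1 + P) * expBeta (n + 1) n) := by
        rw [expBeta_succ_eq_mul n hn']; ring
    _ ≤ medianRate P n := mul_le_mul_of_nonneg_left hmono medianDensityConst_pos.le

lemma medianRate_le (hP : 0 ≤ P) (hn : 1 ≤ n) : medianRate P n ≤ 10 * P := by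
  have hn' : (1 : ℝ) ≤ n := by exact_mod_cast hn
  have hb : (0 : ℝ) < n - 1 / 2 := by linarith
  have hmono :
      ∫ x in Ioi (0 : ℝ), log (1 + P * x) * (1 - exp (-x)) ^ n * exp (-(n : ℝ) * x) ≤
      2 * P * expBeta n (n - 1 / 2) := by
    rw [expBeta, ← integral_const_mul]
    exact setIntegral_mono_on (integrableOn_medianRate_integrand hP hn)
      ((integrableOn_one_sub_exp_neg_pow_mul_exp _ hb).const_mul _) measurableSet_Ioi
      fun x (hx : 0 < x) => medianRate_integrand_le hP hx.le
  have hshift : expBeta n (n - 1 / 2) ≤ 5 * expBeta n n := by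
    have hnonneg := expBeta_nonneg n (n - 1 / 2 + 1)
    rw [expBeta_eq_mul_expBeta_add_one n hb]
    calc (n - 1 / 2 + n + 1) / (n - 1 / 2) * expBeta n (n - 1 / 2 + 1)
        ≤ 5 * expBeta n (n - 1 / 2 + 1) := by
          gcongr
          rw [div_le_iff₀ hb]
          linarith
      _ ≤ 5 * expBeta n n := by
          gcongr
          exact expBeta_le_expBeta_of_le n (by linarith) (by linarith)
  calc medianRate P n ≤ medianDensityConst n * (2 * P * (5 * expBeta n n)) := by
        refine mul_le_mul_of_nonneg_left (hmono.trans ?_) medianDensityConst_pos.le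
        gcongr
    _ = 10 * P := by rw [← mul_one (10 * P), ← medianDensityConst_mul_expBeta hn]; ring

end MedianRate

/-- For every fixed `P > 0` there are constants `0 < c₁ ≤ c₂` such that for all `n ≥ 1`
(with `N = 2n` users):
`c₁ ≤ ((2n)!/(n!(n−1)!)) ∫_0^∞ log(1+Px)(1−e^{−x})^n e^{−nx} dx ≤ c₂`.
Hence the median-user scheduler's throughput, `n` times this quantity, is `Θ(N)`. -/
theorem median_user_rate_theta (P : ℝ) (hP : 0 < P) :
    ∃ c₁ c₂ : ℝ, 0 < c₁ ∧ c₁ ≤ c₂ ∧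
      ∀ n : ℕ, 1 ≤ n →
        c₁ ≤ ((Nat.factorial (2 * n) : ℝ) /
              ((Nat.factorial n : ℝ) * (Nat.factorial (n - 1) : ℝ))) *
            ∫ x in Ioi (0 : ℝ),
              Real.log (1 + P * x) * (1 - Real.exp (-x)) ^ n * Real.exp (-(n : ℝ) * x) ∧
        ((Nat.factorial (2 * n) : ℝ) /
              ((Nat.factorial n : ℝ) * (Nat.factorial (n - 1) : ℝ))) *
            ∫ x in Ioi (0 : ℝ),
              Real.log (1 + P * x) * (1 - Real.exp (-x)) ^ n * Real.exp (-(n : ℝ) * x) ≤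
          c₂ := by
  refine ⟨log (1 + P) / 2, 10 * P, by have := log_pos (by linarith : 1 < 1 + P); positivity,
    ?_, fun n hn => ⟨half_log_one_add_le_medianRate hP.le hn, medianRate_le hP.le hn⟩⟩
  linarith [log_le_sub_one_of_pos (by linarith : 0 < 1 + P)]
end

section
/- Fix a real c > 0 and define for integers N ≥ 1 the sum S(N) = Σ_{m=0}^∞ [ 1 − ( e^{−c} Σ_{l=0}^{m−1} c^l/l! )^N ] (the m = 0 term equals 1, the empty sum being 0). Then S(N) = Θ(log N / log log N): there exist constants 0 < c₁ ≤ c₂ and N₀ such that c₁ · (log N / log log N) ≤ S(N) ≤ c₂ · (log N / log log N) for all N ≥ N₀. -/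
/-!
Write `F(m) = P(X < m)` for `X ∼ Poisson(c)`, so that the `m`-th term is `1 - F(m)^N`, and
the tail `1 - F(m)` lies between `e^{-c} c^m/m!` and `c^m/m!`. Hence a term is at least `1/2`
as long as `N c^m ≥ e^c m!` (since `F^N ≤ exp (-N (1 - F))`), while once `N c^M ≤ M!` the
remaining terms are dominated by the exponential series and add up to at most `e^c`.
Both thresholds are of order `log N / log log N`: `m! ≤ m^m` keeps the first condition for
`m ≤ log N / (2 log log N)`, and `M! ≥ (M/e)^M` gives the second for `M ≥ 2 log N / log log N`.
-/

open Real Finset Filter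
open scoped Nat

namespace PoissonTail

noncomputable def poissonLT (c : ℝ) (m : ℕ) : ℝ :=
  exp (-c) * ∑ l ∈ range m, c ^ l / (l ! : ℝ)

theorem hasSum_pow_div_factorial (c : ℝ) : HasSum (fun n ↦ c ^ n / (n ! : ℝ)) (exp c) := by
  rw [exp_eq_exp_ℝ]
  exact NormedSpace.expSeries_div_hasSum_exp c

theorem one_sub_poissonLT (c : ℝ) (m : ℕ) :
    1 - poissonLT c m = exp (-c) * ∑' k, c ^ (k + m) / ((k + m)! : ℝ) := by
  have h := (hasSum_pow_div_factorial c).tsum_eq ▸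
    (summable_pow_div_factorial c).sum_add_tsum_nat_add m
  rw [poissonLT, eq_sub_of_add_eq' h, mul_sub, ← exp_add, neg_add_cancel, exp_zero]

theorem pow_div_factorial_add_le {c : ℝ} (hc : 0 ≤ c) (k m : ℕ) :
    c ^ (k + m) / ((k + m)! : ℝ) ≤ c ^ m / (m ! : ℝ) * (c ^ k / (k ! : ℝ)) := by
  rw [div_mul_div_comm, ← pow_add, add_comm m k]
  apply div_le_div_of_nonneg_left (by positivity) (by positivity)
  have h := Nat.factorial_mul_factorial_dvd_factorial_add m k
  rw [add_comm m k] at h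
  exact_mod_cast Nat.le_of_dvd (Nat.factorial_pos _) h

theorem exp_neg_mul_pow_div_factorial_le_one_sub_poissonLT {c : ℝ} (hc : 0 ≤ c) (m : ℕ) :
    exp (-c) * (c ^ m / (m ! : ℝ)) ≤ 1 - poissonLT c m := by
  rw [one_sub_poissonLT]
  gcongr
  simpa using ((summable_nat_add_iff m).2 (summable_pow_div_factorial c)).le_tsum 0
    (fun k _ ↦ by positivity)

theorem one_sub_poissonLT_le_pow_div_factorial {c : ℝ} (hc : 0 ≤ c) (m : ℕ) :
    1 - poissonLT c m ≤ c ^ m / (m ! : ℝ) := by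
  have hs := summable_pow_div_factorial c
  calc 1 - poissonLT c m
      ≤ exp (-c) * ∑' k, c ^ m / (m ! : ℝ) * (c ^ k / (k ! : ℝ)) := by
        rw [one_sub_poissonLT]
        refine mul_le_mul_of_nonneg_left ?_ (exp_pos _).le
        exact ((summable_nat_add_iff m).2 hs).tsum_le_tsum (pow_div_factorial_add_le hc · m)
          (hs.mul_left _)
    _ = c ^ m / (m ! : ℝ) := by
        rw [hs.tsum_mul_left, (hasSum_pow_div_factorial c).tsum_eq, mul_left_comm,
          ← exp_add, neg_add_cancel, exp_zero, mul_one]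

theorem poissonLT_nonneg {c : ℝ} (hc : 0 ≤ c) (m : ℕ) : 0 ≤ poissonLT c m := by
  unfold poissonLT
  positivity

theorem poissonLT_le_one {c : ℝ} (hc : 0 ≤ c) (m : ℕ) : poissonLT c m ≤ 1 := by
  have := exp_neg_mul_pow_div_factorial_le_one_sub_poissonLT hc m
  have : 0 ≤ exp (-c) * (c ^ m / (m ! : ℝ)) := by positivity
  linarith

theorem one_sub_pow_le_mul_one_sub {x : ℝ} (hx : -1 ≤ x) (N : ℕ) :
    1 - x ^ N ≤ N * (1 - x) := by
  have := one_add_mul_le_pow (a := x - 1) (by linarith) N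
  rw [add_sub_cancel] at this
  linarith

theorem one_half_le_one_sub_pow {x : ℝ} (hx : 0 ≤ x) {N : ℕ} (h : 1 ≤ N * (1 - x)) :
    1 / 2 ≤ 1 - x ^ N := by
  have hx' : x ≤ exp (-(1 - x)) := by linarith [one_sub_le_exp_neg (1 - x)]
  have : x ^ N ≤ exp (-1) :=
    calc x ^ N ≤ exp (-(1 - x)) ^ N := by gcongr
      _ = exp (-(N * (1 - x))) := by rw [← exp_nat_mul, mul_neg]
      _ ≤ exp (-1) := by gcongr
  linarith [exp_neg_one_lt_half]


theorem one_sub_poissonLT_pow_nonneg (hc : 0 ≤ c) (N m : ℕ) : 0 ≤ 1 - poissonLT c m ^ N :=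
  sub_nonneg.2 (pow_le_one₀ (poissonLT_nonneg hc m) (poissonLT_le_one hc m))

theorem one_sub_poissonLT_pow_le_one (hc : 0 ≤ c) (N m : ℕ) : 1 - poissonLT c m ^ N ≤ 1 :=
  sub_le_self _ (pow_nonneg (poissonLT_nonneg hc m) N)

theorem one_sub_poissonLT_pow_le (hc : 0 ≤ c) (N m : ℕ) :
    1 - poissonLT c m ^ N ≤ N * (c ^ m / (m ! : ℝ)) :=
  (one_sub_pow_le_mul_one_sub (by linarith [poissonLT_nonneg hc m]) N).trans <|
    mul_le_mul_of_nonneg_left (one_sub_poissonLT_le_pow_div_factorial hc m) N.cast_nonneg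

theorem summable_one_sub_poissonLT_pow (hc : 0 ≤ c) (N : ℕ) : Summable fun m ↦ 1 - poissonLT c m ^ N :=
  .of_nonneg_of_le (one_sub_poissonLT_pow_nonneg hc N) (one_sub_poissonLT_pow_le hc N)
    ((summable_pow_div_factorial c).mul_left _)

theorem tsum_one_sub_poissonLT_pow_le (hc : 0 ≤ c) {N M : ℕ} (hM : N * c ^ M ≤ (M ! : ℝ)) :
    ∑' m, (1 - poissonLT c m ^ N) ≤ M + exp c := by
  have hs := summable_one_sub_poissonLT_pow hc N
  have htail (k : ℕ) : 1 - poissonLT c (k + M) ^ N ≤ c ^ k / (k ! : ℝ) :=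
    calc 1 - poissonLT c (k + M) ^ N ≤ N * (c ^ (k + M) / ((k + M)! : ℝ)) :=
          one_sub_poissonLT_pow_le hc N _
      _ ≤ N * (c ^ M / (M ! : ℝ) * (c ^ k / (k ! : ℝ))) := by
          gcongr; exact pow_div_factorial_add_le hc k M
      _ = N * c ^ M / (M ! : ℝ) * (c ^ k / (k ! : ℝ)) := by ring
      _ ≤ 1 * (c ^ k / (k ! : ℝ)) := by
          gcongr; exact div_le_one_of_le₀ hM (by positivity)
      _ = c ^ k / (k ! : ℝ) := one_mul _
  rw [← hs.sum_add_tsum_nat_add M, ← (hasSum_pow_div_factorial c).tsum_eq]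
  refine add_le_add ?_
    (((summable_nat_add_iff M).2 hs).tsum_le_tsum htail (summable_pow_div_factorial c))
  calc ∑ m ∈ range M, (1 - poissonLT c m ^ N) ≤ ∑ _m ∈ range M, (1 : ℝ) :=
        sum_le_sum fun m _ ↦ one_sub_poissonLT_pow_le_one hc N m
    _ = M := by simp

theorem le_tsum_one_sub_poissonLT_pow (hc : 0 ≤ c) {N M : ℕ} (hM : ∀ m < M, exp c * m ! ≤ N * c ^ m) :
    (M / 2 : ℝ) ≤ ∑' m, (1 - poissonLT c m ^ N) := by
  have hhalf : ∀ m ∈ range M, (1 / 2 : ℝ) ≤ 1 - poissonLT c m ^ N := by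
    intro m hm
    refine one_half_le_one_sub_pow (poissonLT_nonneg hc m) ?_
    calc (1 : ℝ) ≤ N * (exp (-c) * (c ^ m / (m ! : ℝ))) := by
          rw [exp_neg, ← mul_div_assoc, inv_mul_eq_div, div_div, ← mul_div_assoc,
            one_le_div (by positivity)]
          exact hM m (mem_range.1 hm)
      _ ≤ N * (1 - poissonLT c m) := by
          gcongr; exact exp_neg_mul_pow_div_factorial_le_one_sub_poissonLT hc m
  calc (M / 2 : ℝ) = ∑ _m ∈ range M, (1 / 2 : ℝ) := by rw [sum_const, card_range, nsmul_eq_mul]; ring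
    _ ≤ ∑ m ∈ range M, (1 - poissonLT c m ^ N) := sum_le_sum hhalf
    _ ≤ ∑' m, (1 - poissonLT c m ^ N) :=
        (summable_one_sub_poissonLT_pow hc N).sum_le_tsum _
          fun m _ ↦ one_sub_poissonLT_pow_nonneg hc N m

theorem tendsto_div_log_atTop : Tendsto (fun x ↦ x / log x) atTop atTop := by
  refine ((tendsto_exp_div_pow_atTop 1).comp tendsto_log_atTop).congr' ?_
  filter_upwards [eventually_gt_atTop 0] with x hx
  simp [exp_log hx]

theorem eventually_exp_mul_factorial_le {c : ℝ} (hc : 0 < c) :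
    ∀ᶠ x in atTop, ∀ m : ℕ, (m : ℝ) ≤ x / log x / 2 → exp c * m ! ≤ exp x * c ^ m := by
  filter_upwards [eventually_ge_atTop (2 * c), eventually_gt_atTop 1,
    tendsto_log_atTop.eventually_ge_atTop (1 / (2 * c))] with x hcx hx hlogx m hm
  have hlog : 0 < log x := log_pos hx
  rw [div_div, le_div_iff₀ (by positivity)] at hm
  rw [div_le_iff₀ (by positivity)] at hlogx
  have hmc : (m : ℝ) ≤ c * x := by nlinarith [mul_le_mul_of_nonneg_left hlogx m.cast_nonneg]
  have hfac : (m ! : ℝ) ≤ c ^ m * x ^ m := by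
    rw [← mul_pow]
    calc (m ! : ℝ) ≤ (m : ℝ) ^ m := by exact_mod_cast Nat.factorial_le_pow m
      _ ≤ (c * x) ^ m := by gcongr
  have hxm : x ^ m ≤ exp (x / 2) := by
    rw [← exp_log (by positivity : 0 < x ^ m), log_pow]
    exact exp_le_exp.2 (by linarith)
  calc exp c * m ! ≤ exp (x / 2) * (c ^ m * exp (x / 2)) := by
        gcongr
        · linarith
        · exact hfac.trans (by gcongr)
    _ = exp x * c ^ m := by rw [mul_comm (c ^ m), ← mul_assoc, ← exp_add, add_halves]

theorem eventually_exp_mul_pow_le_factorial {c : ℝ} (hc : 0 < c) :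
    ∀ᶠ x in atTop, ∀ M : ℕ, 2 * (x / log x) ≤ M → exp x * c ^ M ≤ M ! := by
  have hε : 0 < 4 / (exp 1 * c) ^ 2 := by positivity
  filter_upwards [eventually_gt_atTop 1, (isLittleO_pow_log_id_atTop (n := 2)).bound hε]
    with x hx hlogsq M hM
  have hlog : 0 < log x := log_pos hx
  rw [norm_of_nonneg (by positivity), id, norm_of_nonneg (by linarith),
    div_mul_eq_mul_div, le_div_iff₀ (by positivity)] at hlogsq
  rw [mul_div_assoc', div_le_iff₀ hlog] at hM
  set K := M / (exp 1 * c) with hK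
  have hMK : (M : ℝ) = K * (exp 1 * c) := by rw [hK, div_mul_cancel₀]; positivity
  have hK0 : 0 < K := by
    have : (0 : ℝ) < M := pos_of_mul_pos_left (by linarith) hlog.le
    positivity
  have hxK : x ≤ K ^ 2 := by
    have h4 : 4 * x ^ 2 ≤ K ^ 2 * ((exp 1 * c) ^ 2 * log x ^ 2) := by
      rw [hMK] at hM
      nlinarith
    nlinarith
  have hxMK : x ≤ M * log K := by
    have := log_le_log (by linarith) hxK
    rw [log_pow] at this
    push_cast at this
    nlinarith [mul_le_mul_of_nonneg_left this M.cast_nonneg]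
  have hMM : (M : ℝ) ^ M ≤ M ! * exp M := by
    rw [← div_le_iff₀' (by positivity)]
    exact Real.pow_div_factorial_le_exp _ M.cast_nonneg M
  have : exp x * c ^ M * exp M ≤ M ! * exp M :=
    calc exp x * c ^ M * exp M ≤ K ^ M * c ^ M * exp 1 ^ M := by
          rw [exp_one_pow]
          gcongr
          rw [← exp_log hK0, ← exp_nat_mul]
          exact exp_le_exp.2 hxMK
      _ = (M : ℝ) ^ M := by rw [hMK]; ring
      _ ≤ M ! * exp M := hMM
  exact le_of_mul_le_mul_right this (exp_pos _)

end PoissonTail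

open PoissonTail in
/-- Fix `c > 0` and set `S(N) = Σ_{m=0}^∞ [1 − (e^{−c} Σ_{l=0}^{m−1} c^l/l!)^N]`.
Then `S(N) = Θ(log N / log log N)`. -/
theorem poisson_tail_sum_theta (c : ℝ) (hc : 0 < c) :
    ∃ c₁ c₂ : ℝ, ∃ N₀ : ℕ, 0 < c₁ ∧ c₁ ≤ c₂ ∧
      ∀ N : ℕ, N₀ ≤ N →
        c₁ * (Real.log N / Real.log (Real.log N)) ≤
            (∑' m : ℕ, (1 - (Real.exp (-c) *
              ∑ l ∈ Finset.range m, c ^ l / (Nat.factorial l : ℝ)) ^ N)) ∧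
          (∑' m : ℕ, (1 - (Real.exp (-c) *
              ∑ l ∈ Finset.range m, c ^ l / (Nat.factorial l : ℝ)) ^ N)) ≤
            c₂ * (Real.log N / Real.log (Real.log N)) := by
  have hlogN : Tendsto (fun N : ℕ ↦ log N) atTop atTop :=
    tendsto_log_atTop.comp tendsto_natCast_atTop_atTop
  obtain ⟨N₀, hN₀⟩ := eventually_atTop.1 <| (eventually_gt_atTop 0).and <| hlogN.eventually <|
    (eventually_exp_mul_factorial_le hc).and <| (eventually_exp_mul_pow_le_factorial hc).and <|
      tendsto_div_log_atTop.eventually_ge_atTop (max 4 (exp c + 1))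
  refine ⟨1 / 8, 4, N₀, by norm_num, by norm_num, fun N hN ↦ ?_⟩
  obtain ⟨hN, hlow, hup, hL⟩ := hN₀ N hN
  rw [exp_log (by exact_mod_cast hN)] at hlow hup
  set L := log N / log (log N)
  have hL4 : 4 ≤ L := le_of_max_le_left hL
  have hLc : exp c + 1 ≤ L := le_of_max_le_right hL
  constructor
  · calc 1 / 8 * L ≤ (⌊L / 2⌋₊ / 2 : ℝ) := by linarith [Nat.lt_floor_add_one (L / 2)]
      _ ≤ _ := le_tsum_one_sub_poissonLT_pow hc.le fun m hm ↦
          hlow m ((Nat.cast_lt.2 hm).le.trans (Nat.floor_le (by positivity)))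
  · calc _ ≤ (⌈2 * L⌉₊ + exp c : ℝ) :=
          tsum_one_sub_poissonLT_pow_le hc.le (hup _ (Nat.le_ceil _))
      _ ≤ 4 * L := by linarith [Nat.ceil_lt_add_one (by positivity : 0 ≤ 2 * L)]
end

section
/- Let (H_k)_{k≥1} be i.i.d. unit-mean exponential random variables on a probability space and fix a real R̄ > 0. For integers N ≥ 1 and m ≥ 0 define p_N(m) = 1 − ( ℙ( Σ_{k=1}^m log(1+H_k) > R̄ ) )^N. Then the average delay of incremental redundancy multicast, D(N) = Σ_{m=0}^∞ p_N(m), satisfies D(N) = Θ(log N / log log N): there exist constants 0 < c₁ ≤ c₂ and N₀ such that c₁ · (log N / log log N) ≤ D(N) ≤ c₂ · (log N / log log N) for all N ≥ N₀. -/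
/-!
Let `ε m = ℙ(∑_{k=1}^m log (1 + H_k) ≤ R̄)` be the probability that a single user has not decoded
after `m` increments, so that `p_N(m) = 1 - (1 - ε m)^N ≤ N ε m`, while `p_N(m) ≥ 1 - 1/e` as soon
as `ε m ≥ 1/N`.

If the accumulated information after `m` increments is at most `R̄`, at least half of the gains
`H_1, …, H_m` lie below `4R̄/m`; a union bound over these halves gives `ε m ≤ (16R̄/m)^{m/2}`.
Conversely, if all gains lie below `R̄/M`, the accumulated information stays below `R̄` up to
`m = M`, so `ε m ≥ (R̄/2M)^M` for `m ≤ M`.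

With `r = log N / log log N`, the first bound makes `∑_{m ≥ 8r} N ε m ≤ 1`, so `D(N) ≤ 8r + 2`;
the second gives `ε m ≥ 1/N`, hence `p_N(m) ≥ 1/2`, for all `m ≤ r/4`, so `D(N) ≥ r/8`.
-/

open Real Finset MeasureTheory ProbabilityTheory Filter

lemma half_le_one_sub_exp_neg {x : ℝ} (hx0 : 0 ≤ x) (hx1 : x ≤ 1) : x / 2 ≤ 1 - exp (-x) := by
  have h : exp (-x) ≤ (1 + x)⁻¹ := by
    rw [exp_neg]; exact inv_anti₀ (by linarith) (by linarith [add_one_le_exp x])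
  have h' : (1 + x)⁻¹ ≤ 1 - x / 2 := by
    rw [inv_le_iff_one_le_mul₀ (by linarith)]; nlinarith
  linarith

lemma one_sub_one_sub_pow_le_mul {t : ℝ} (ht : t ≤ 2) (N : ℕ) : 1 - (1 - t) ^ N ≤ N * t := by
  have := one_add_mul_le_pow (a := -t) (by linarith) N
  rw [← sub_eq_add_neg] at this
  linarith

lemma half_le_one_sub_one_sub_pow {N : ℕ} (hN : 0 < N) {t : ℝ} (ht : 1 / N ≤ t) (ht1 : t ≤ 1) :
    1 / 2 ≤ 1 - (1 - t) ^ N := by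
  have h : (1 - t) ^ N ≤ (1 - 1 / N) ^ N := by gcongr
  linarith [one_sub_div_pow_le_exp_neg (t := 1) (n := N) (by exact_mod_cast hN),
    exp_neg_one_lt_half]

lemma one_sub_one_sub_pow_nonneg {t : ℝ} (ht0 : 0 ≤ t) (ht1 : t ≤ 1) (N : ℕ) :
    0 ≤ 1 - (1 - t) ^ N := by
  linarith [pow_le_one₀ (n := N) (by linarith : 0 ≤ 1 - t) (by linarith : 1 - t ≤ 1)]

lemma sqrt_div_le_half {R x : ℝ} (hx : 64 * R ≤ x) (hx0 : 0 < x) :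
    √(16 * R / x) ≤ 1 / 2 := by
  rw [sqrt_le_left (by norm_num), div_le_iff₀ hx0]
  linarith

lemma Finset.exists_subset_card_lt_two_mul_div {ι : Type*} (s : Finset ι) (x : ι → ℝ)
    (hx : ∀ i ∈ s, 0 ≤ x i) {R : ℝ} (hR : 0 < R) (hsum : ∑ i ∈ s, x i ≤ R) :
    ∃ T ⊆ s, #T = #s - #s / 2 ∧ ∀ i ∈ T, x i < 2 * R / #s := by
  classical
  rcases (#s).eq_zero_or_pos with hs | hs
  · exact ⟨∅, empty_subset _, by simp [hs], by simp⟩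
  set B := {i ∈ s | 2 * R / #s ≤ x i} with hB
  have hmarkov : #B * (2 * R / #s) ≤ R :=
    calc #B * (2 * R / #s) ≤ ∑ i ∈ B, x i := by
          simpa using card_nsmul_le_sum B x _ fun i hi => (mem_filter.1 hi).2
      _ ≤ ∑ i ∈ s, x i := sum_le_sum_of_subset_of_nonneg (filter_subset _ _) fun i hi _ => hx i hi
      _ ≤ R := hsum
  have hBcard : 2 * #B ≤ #s := by
    rw [mul_div_assoc', div_le_iff₀ (by exact_mod_cast hs)] at hmarkov
    exact_mod_cast (by nlinarith : (2 * #B : ℝ) ≤ #s)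
  obtain ⟨T, hT, hTcard⟩ := exists_subset_card_eq (s := s \ B) (n := #s - #s / 2) <| by
    rw [card_sdiff_of_subset (filter_subset _ _), ← hB]; omega
  refine ⟨T, hT.trans sdiff_subset, hTcard, fun i hi => ?_⟩
  obtain ⟨his, hiB⟩ := mem_sdiff.1 (hT hi)
  simpa [B, his] using hiB

lemma pow_sub_div_two_le_sqrt_pow {q : ℝ} (hq0 : 0 ≤ q) (hq1 : q ≤ 1) (m : ℕ) :
    q ^ (m - m / 2) ≤ √q ^ m := by
  rw [← sq_sqrt hq0, ← pow_mul, sq_sqrt hq0]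
  exact pow_le_pow_of_le_one (sqrt_nonneg q) (sqrt_le_one.2 hq1) (by omega)

lemma exists_mem_powersetCard_forall_le_of_sum_log_one_add_le {h : ℕ → ℝ} (hh : ∀ k, 0 ≤ h k)
    {R : ℝ} (hR : 0 < R) {m : ℕ} (hm : 2 * R ≤ m) (hS : ∑ k ∈ Icc 1 m, log (1 + h k) ≤ R) :
    ∃ T ∈ (Icc 1 m).powersetCard (m - m / 2), ∀ k ∈ T, h k ≤ 4 * R / m := by
  obtain ⟨T, hTs, hTcard, hT⟩ := (Icc 1 m).exists_subset_card_lt_two_mul_div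
    (fun k => log (1 + h k)) (fun k _ => log_nonneg (by linarith [hh k])) hR hS
  simp only [Nat.card_Icc, add_tsub_cancel_right] at hTcard hT
  refine ⟨T, mem_powersetCard.2 ⟨hTs, hTcard⟩, fun k hk => ?_⟩
  -- `log (1 + h k) < c` with `c = 2R/m ≤ 1` gives `h k < exp c - 1 ≤ 2c`
  have hc : |2 * R / m| ≤ 1 := by
    rw [abs_of_nonneg (by positivity), div_le_one (by linarith)]; exact hm
  have hlt := (log_lt_iff_lt_exp (by linarith [hh k])).1 (hT k hk)
  have hexp := (le_abs_self _).trans (abs_exp_sub_one_le hc)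
  rw [abs_of_nonneg (by positivity)] at hexp
  linarith [show 2 * (2 * R / m) = 4 * R / m by ring]

lemma tendsto_div_log_atTop : Tendsto (fun x : ℝ => x / log x) atTop atTop := by
  have h := tendsto_pow_log_div_mul_add_atTop 1 0 1 one_ne_zero
  simp only [pow_one, one_mul, add_zero] at h
  have hpos : ∀ᶠ x : ℝ in atTop, 0 < log x / x := by
    filter_upwards [eventually_gt_atTop 1] with x hx
    exact div_pos (log_pos hx) (by linarith)
  exact (tendsto_nhdsWithin_iff.2 ⟨h, hpos⟩).inv_tendsto_nhdsGT_zero.congr fun x => inv_div _ _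

lemma tendsto_half_sub_log_atTop : Tendsto (fun x : ℝ => x / 2 - log x) atTop atTop := by
  refine tendsto_atTop_mono' _ ?_ (tendsto_id.atTop_div_const (by norm_num : (0 : ℝ) < 4))
  filter_upwards [isLittleO_log_id_atTop.bound (by norm_num : (0 : ℝ) < 1 / 4),
    eventually_ge_atTop 0] with x hx hx0
  simp only [norm_eq_abs, id_eq, abs_of_nonneg hx0] at hx ⊢
  linarith [le_abs_self (log x)]

lemma eventually_log_natCast {p : ℝ → Prop} (h : ∀ᶠ L in atTop, p L) :
    ∀ᶠ N : ℕ in atTop, p (log N) :=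
  (tendsto_log_atTop.comp tendsto_natCast_atTop_atTop).eventually h

lemma two_mul_exp_mul_sqrt_pow_le_one {A L : ℝ} {M : ℕ} (hA : 0 < A) (hL : 1 < L)
    (hL2 : log 2 ≤ L) (hM : 8 * (L / log L) ≤ M)
    (hlog : log A + log L / 2 ≤ log (L / log L)) : 2 * exp L * √(A / M) ^ M ≤ 1 := by
  have hLL : 0 < log L := log_pos hL
  have hr : 0 < L / log L := by positivity
  have hM0 : (0 : ℝ) < M := by linarith
  have hlogM : log (L / log L) ≤ log M := log_le_log hr (by linarith)
  have hML : 2 * L ≤ M * (log L / 4) := by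
    calc 2 * L = 8 * (L / log L) * (log L / 4) := by field_simp; ring
      _ ≤ M * (log L / 4) := by gcongr
  have hMlog : M * (log L / 4) ≤ M * ((log M - log A) / 2) :=
    mul_le_mul_of_nonneg_left (by linarith) hM0.le
  rw [← log_nonpos_iff (by positivity), log_mul (by positivity) (by positivity),
    log_mul two_ne_zero (exp_pos _).ne', log_exp, log_pow, log_sqrt (by positivity),
    log_div hA.ne' hM0.ne']
  linarith

lemma exp_neg_le_div_two_mul_pow {R L : ℝ} {M : ℕ} (hR : 0 < R) (hL0 : 0 < L) (hL : 1 ≤ log L)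
    (hM0 : 0 < M) (hM : M ≤ L / log L / 4) (hRL : -log (R / 2) ≤ 3 * log L) :
    exp (-L) ≤ (R / (2 * M)) ^ M := by
  have hM0' : (0 : ℝ) < M := by exact_mod_cast hM0
  have hML : (M : ℝ) ≤ L := hM.trans (by
    rw [div_div, div_le_iff₀ (by positivity)]; nlinarith)
  have hlogM : log M ≤ log L := log_le_log hM0' hML
  have hbound : M * (log M - log (R / 2)) ≤ L :=
    calc M * (log M - log (R / 2)) ≤ M * (4 * log L) := by gcongr; linarith
      _ ≤ L / log L / 4 * (4 * log L) := by gcongr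
      _ = L := by field_simp
  rw [← exp_log (by positivity : 0 < (R / (2 * M)) ^ M), exp_le_exp, log_pow,
    show R / (2 * M) = R / 2 / M by ring, log_div (by positivity) hM0'.ne']
  linarith

section Exponential

variable {Ω : Type*} [MeasurableSpace Ω] {P : Measure Ω}

lemma measure_setOf_le_of_map_eq_expMeasure {X : Ω → ℝ} (hX : Measurable X)
    (hdist : P.map X = expMeasure 1) {a : ℝ} (ha : 0 ≤ a) :
    P {ω | X ω ≤ a} = ENNReal.ofReal (1 - exp (-a)) := by
  have := isProbabilityMeasure_expMeasure one_pos
  change P (X ⁻¹' Set.Iic a) = _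
  rw [← Measure.map_apply hX measurableSet_Iic, hdist,
    ← ofReal_cdf, cdf_expMeasure_eq one_pos, if_pos ha, one_mul]

lemma ae_pos_of_map_eq_expMeasure {X : Ω → ℝ} (hX : Measurable X)
    (hdist : P.map X = expMeasure 1) : ∀ᵐ ω ∂P, 0 < X ω := by
  simpa [ae_iff] using measure_setOf_le_of_map_eq_expMeasure hX hdist le_rfl

lemma measure_biInter_setOf_le_of_iIndepFun {ι : Type*} {H : ι → Ω → ℝ}
    (hmeas : ∀ k, Measurable (H k)) (hindep : iIndepFun H P)
    (hdist : ∀ k, P.map (H k) = expMeasure 1) (T : Finset ι) {a : ℝ} (ha : 0 ≤ a) :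
    P (⋂ k ∈ T, {ω | H k ω ≤ a}) = ENNReal.ofReal (1 - exp (-a)) ^ #T := by
  rw [← prod_const,
    ← prod_congr rfl fun k _ => measure_setOf_le_of_map_eq_expMeasure (hmeas k) (hdist k) ha]
  exact hindep.meas_biInter fun _ _ => ⟨Set.Iic a, measurableSet_Iic, rfl⟩

def outageProb (P : Measure Ω) (H : ℕ → Ω → ℝ) (R : ℝ) (m : ℕ) : ℝ :=
  P.real {ω | ∑ k ∈ Icc 1 m, log (1 + H k ω) ≤ R}

variable {H : ℕ → Ω → ℝ}

lemma outageProb_le_sqrt_pow (hmeas : ∀ k, Measurable (H k)) (hindep : iIndepFun H P)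
    (hdist : ∀ k, P.map (H k) = expMeasure 1) {R : ℝ} (hR : 0 < R) {m : ℕ}
    (hm : 4 * R ≤ m) : outageProb P H R m ≤ √(16 * R / m) ^ m := by
  set j := m - m / 2
  set q := 4 * R / m with hq
  have hq0 : 0 ≤ q := by positivity
  have hincl : {ω | ∑ k ∈ Icc 1 m, log (1 + H k ω) ≤ R} ≤ᵐ[P]
      ⋃ T ∈ (Icc 1 m).powersetCard j, ⋂ k ∈ T, {ω | H k ω ≤ q} := by
    filter_upwards [ae_all_iff.2 fun k => ae_pos_of_map_eq_expMeasure (hmeas k) (hdist k)]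
      with ω hpos hS
    obtain ⟨T, hT, hTq⟩ := exists_mem_powersetCard_forall_le_of_sum_log_one_add_le
      (fun k => (hpos k).le) hR (by linarith) hS
    exact Set.mem_iUnion₂.2 ⟨T, hT, Set.mem_iInter₂.2 hTq⟩
  have hbound : P {ω | ∑ k ∈ Icc 1 m, log (1 + H k ω) ≤ R} ≤ ENNReal.ofReal (2 ^ m * q ^ j) :=
    calc _ ≤ P (⋃ T ∈ (Icc 1 m).powersetCard j, ⋂ k ∈ T, {ω | H k ω ≤ q}) :=
          measure_mono_ae hincl
      _ ≤ ∑ T ∈ (Icc 1 m).powersetCard j, P (⋂ k ∈ T, {ω | H k ω ≤ q}) :=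
          measure_biUnion_finset_le _ _
      _ = ∑ T ∈ (Icc 1 m).powersetCard j, ENNReal.ofReal ((1 - exp (-q)) ^ j) :=
          sum_congr rfl fun T hT => by
            rw [measure_biInter_setOf_le_of_iIndepFun hmeas hindep hdist T hq0,
              (mem_powersetCard.1 hT).2, ENNReal.ofReal_pow (by simp [hq0])]
      _ ≤ ∑ T ∈ (Icc 1 m).powersetCard j, ENNReal.ofReal (q ^ j) := by
          gcongr
          · exact sub_nonneg.2 (exp_le_one_iff.2 (by linarith))
          · linarith [one_sub_le_exp_neg q]
      _ = ENNReal.ofReal (m.choose j * q ^ j) := by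
          rw [sum_const, card_powersetCard, Nat.card_Icc, add_tsub_cancel_right, nsmul_eq_mul,
            ENNReal.ofReal_mul (by positivity), ENNReal.ofReal_natCast]
      _ ≤ ENNReal.ofReal (2 ^ m * q ^ j) := by
          gcongr; exact_mod_cast m.choose_le_two_pow j
  have hq1 : q ≤ 1 := by rw [hq, div_le_one (by linarith)]; linarith
  calc outageProb P H R m ≤ 2 ^ m * q ^ j := ENNReal.toReal_le_of_le_ofReal (by positivity) hbound
    _ ≤ 2 ^ m * √q ^ m := by gcongr; exact pow_sub_div_two_le_sqrt_pow hq0 hq1 m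
    _ = √(16 * R / m) ^ m := by
      rw [← mul_pow, hq, show 16 * R / m = 2 ^ 2 * (4 * R / m) by ring, sqrt_mul (by norm_num),
        sqrt_sq (by norm_num)]

lemma pow_le_outageProb [IsFiniteMeasure P] (hmeas : ∀ k, Measurable (H k))
    (hindep : iIndepFun H P) (hdist : ∀ k, P.map (H k) = expMeasure 1) {R : ℝ} (hR : 0 < R)
    {m M : ℕ} (hRM : R ≤ M) (hm : m ≤ M) : (R / (2 * M)) ^ M ≤ outageProb P H R m := by
  have hM0 : (0 : ℝ) < M := hR.trans_le hRM
  set x := R / M with hx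
  have hx0 : 0 ≤ x := by positivity
  have hx1 : x ≤ 1 := by rw [div_le_one hM0]; exact hRM
  have hincl : ⋂ k ∈ Icc 1 m, {ω | H k ω ≤ x} ≤ᵐ[P]
      {ω | ∑ k ∈ Icc 1 m, log (1 + H k ω) ≤ R} := by
    filter_upwards [ae_all_iff.2 fun k => ae_pos_of_map_eq_expMeasure (hmeas k) (hdist k)]
      with ω hpos hω
    have hle : ∀ k ∈ Icc 1 m, log (1 + H k ω) ≤ x := fun k hk =>
      (log_le_sub_one_of_pos (by linarith [hpos k])).trans
        (by linarith [show H k ω ≤ x from Set.mem_iInter₂.1 hω k hk])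
    calc ∑ k ∈ Icc 1 m, log (1 + H k ω) ≤ #(Icc 1 m) • x := sum_le_card_nsmul _ _ _ hle
      _ = m * x := by simp
      _ ≤ M * x := by gcongr
      _ = R := by rw [hx]; field_simp
  have hx2 := half_le_one_sub_exp_neg hx0 hx1
  have hbound : ENNReal.ofReal ((x / 2) ^ m) ≤ P {ω | ∑ k ∈ Icc 1 m, log (1 + H k ω) ≤ R} :=
    calc _ ≤ ENNReal.ofReal ((1 - exp (-x)) ^ m) := by gcongr
      _ = P (⋂ k ∈ Icc 1 m, {ω | H k ω ≤ x}) := by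
          rw [measure_biInter_setOf_le_of_iIndepFun hmeas hindep hdist _ hx0, Nat.card_Icc,
            add_tsub_cancel_right, ENNReal.ofReal_pow (by linarith)]
      _ ≤ _ := measure_mono_ae hincl
  calc (R / (2 * M)) ^ M = (x / 2) ^ M := by rw [hx, div_div, mul_comm]
    _ ≤ (x / 2) ^ m := pow_le_pow_of_le_one (by positivity) (by linarith) hm
    _ ≤ outageProb P H R m := (ENNReal.ofReal_le_iff_le_toReal (measure_ne_top _ _)).1 hbound

lemma measureReal_lt_sum_eq_one_sub_outageProb [IsProbabilityMeasure P]
    (hmeas : ∀ k, Measurable (H k)) (R : ℝ) (m : ℕ) :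
    P.real {ω | R < ∑ k ∈ Icc 1 m, log (1 + H k ω)} = 1 - outageProb P H R m := by
  rw [outageProb, ← probReal_compl_eq_one_sub (measurableSet_le (by fun_prop) measurable_const)]
  congr 1
  ext ω
  simp

end Exponential

noncomputable def delay (ε : ℕ → ℝ) (N : ℕ) : ℝ := ∑' m, (1 - (1 - ε m) ^ N)

section Delay

variable {ε : ℕ → ℝ}

lemma summable_one_sub_one_sub_pow (hε0 : ∀ m, 0 ≤ ε m) (hε1 : ∀ m, ε m ≤ 1) {z : ℝ}
    (hz0 : 0 ≤ z) (hz1 : z < 1) {M : ℕ} (htail : ∀ m, M ≤ m → ε m ≤ z ^ m) (N : ℕ) :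
    Summable fun m => 1 - (1 - ε m) ^ N := by
  refine ((summable_geometric_of_lt_one hz0 hz1).mul_left (N : ℝ)).of_norm_bounded_eventually_nat ?_
  filter_upwards [eventually_ge_atTop M] with m hm
  rw [norm_of_nonneg (one_sub_one_sub_pow_nonneg (hε0 m) (hε1 m) N)]
  exact (one_sub_one_sub_pow_le_mul (by linarith [hε1 m]) N).trans (by gcongr; exact htail m hm)

lemma delay_le (hε0 : ∀ m, 0 ≤ ε m) (hε1 : ∀ m, ε m ≤ 1) {z : ℝ} (hz0 : 0 ≤ z) (hz : z ≤ 1 / 2)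
    {M N : ℕ} (htail : ∀ m, M ≤ m → ε m ≤ z ^ m) (hN : 2 * N * z ^ M ≤ 1) :
    delay ε N ≤ M + 1 := by
  have hsum := summable_one_sub_one_sub_pow hε0 hε1 hz0 (by linarith) htail N
  have hhead : ∑ m ∈ range M, (1 - (1 - ε m) ^ N) ≤ M := by
    simpa using sum_le_card_nsmul (range M) (fun m => 1 - (1 - ε m) ^ N) 1 fun m _ => by
      linarith [pow_nonneg (n := N) (by linarith [hε1 m] : 0 ≤ 1 - ε m)]
  have hterm (i : ℕ) : 1 - (1 - ε (i + M)) ^ N ≤ N * z ^ M * z ^ i :=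
    calc 1 - (1 - ε (i + M)) ^ N ≤ N * ε (i + M) :=
          one_sub_one_sub_pow_le_mul (by linarith [hε1 (i + M)]) N
      _ ≤ N * z ^ (i + M) := by gcongr; exact htail _ (Nat.le_add_left M i)
      _ = N * z ^ M * z ^ i := by ring
  have htail : ∑' i, (1 - (1 - ε (i + M)) ^ N) ≤ 1 :=
    calc ∑' i, (1 - (1 - ε (i + M)) ^ N) ≤ ∑' i, N * z ^ M * z ^ i :=
          ((summable_nat_add_iff M).2 hsum).tsum_le_tsum hterm
            ((summable_geometric_of_lt_one hz0 (by linarith)).mul_left _)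
      _ = N * z ^ M * (1 - z)⁻¹ := by
          rw [tsum_mul_left, tsum_geometric_of_lt_one hz0 (by linarith)]
      _ ≤ N * z ^ M * 2 := by gcongr; rw [inv_le_comm₀ (by linarith) two_pos]; linarith
      _ ≤ 1 := by linarith
  rw [delay, ← hsum.sum_add_tsum_nat_add M]
  linarith

lemma le_delay (hε0 : ∀ m, 0 ≤ ε m) (hε1 : ∀ m, ε m ≤ 1) {N : ℕ} (hN : 0 < N)
    (hsum : Summable fun m => 1 - (1 - ε m) ^ N) {M : ℕ} (hM : ∀ m ≤ M, 1 / N ≤ ε m) :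
    (M + 1) / 2 ≤ delay ε N :=
  calc ((M : ℝ) + 1) / 2 = ∑ m ∈ range (M + 1), (1 / 2 : ℝ) := by simp; ring
    _ ≤ ∑ m ∈ range (M + 1), (1 - (1 - ε m) ^ N) := sum_le_sum fun m hm =>
        half_le_one_sub_one_sub_pow hN (hM m (Nat.lt_succ_iff.1 (mem_range.1 hm))) (hε1 m)
    _ ≤ delay ε N := hsum.sum_le_tsum _ fun m _ => one_sub_one_sub_pow_nonneg (hε0 m) (hε1 m) N

lemma summable_one_sub_one_sub_pow_of_le_sqrt_pow (hε0 : ∀ m, 0 ≤ ε m) (hε1 : ∀ m, ε m ≤ 1)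
    {R : ℝ} (hR : 0 < R) (hup : ∀ m : ℕ, 4 * R ≤ m → ε m ≤ √(16 * R / m) ^ m) (N : ℕ) :
    Summable fun m => 1 - (1 - ε m) ^ N := by
  refine summable_one_sub_one_sub_pow hε0 hε1 (z := 1 / 2) (by norm_num) (by norm_num)
    (M := ⌈64 * R⌉₊) (fun m hm => ?_) N
  have hm : 64 * R ≤ m := Nat.ceil_le.1 hm
  exact (hup m (by linarith)).trans
    (pow_le_pow_left₀ (sqrt_nonneg _) (sqrt_div_le_half hm (by linarith)) m)

lemma eventually_delay_le (hε0 : ∀ m, 0 ≤ ε m) (hε1 : ∀ m, ε m ≤ 1) {R : ℝ} (hR : 0 < R)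
    (hup : ∀ m : ℕ, 4 * R ≤ m → ε m ≤ √(16 * R / m) ^ m) :
    ∀ᶠ N : ℕ in atTop, delay ε N ≤ 10 * (log N / log (log N)) := by
  have hL : ∀ᶠ L : ℝ in atTop, 1 < L ∧ log 2 ≤ L ∧ 8 * R + 1 ≤ L / log L ∧
      log (16 * R) ≤ log L / 2 - log (log L) :=
    (eventually_gt_atTop 1).and <| (eventually_ge_atTop _).and <|
      (tendsto_div_log_atTop.eventually_ge_atTop _).and <|
      (tendsto_half_sub_log_atTop.comp tendsto_log_atTop).eventually_ge_atTop _
  filter_upwards [eventually_log_natCast hL] with N ⟨hL1, hL2, hr, hlog⟩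
  set L := log N
  have hN : (N : ℝ) = exp L :=
    (exp_log (Nat.cast_pos.2 (Nat.pos_of_ne_zero (by rintro rfl; norm_num [L] at hL1)))).symm
  set M := ⌈8 * (L / log L)⌉₊
  have hM : 8 * (L / log L) ≤ M := Nat.le_ceil _
  have hz : √(16 * R / M) ≤ 1 / 2 := sqrt_div_le_half (by linarith) (by linarith)
  have htail (m : ℕ) (hm : M ≤ m) : ε m ≤ √(16 * R / M) ^ m := by
    have hMm : (M : ℝ) ≤ m := by exact_mod_cast hm
    exact (hup m (by linarith)).trans (by gcongr; linarith)
  have hNz : 2 * N * √(16 * R / M) ^ M ≤ 1 := by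
    rw [hN]
    refine two_mul_exp_mul_sqrt_pow_le_one (by positivity) hL1 hL2 hM ?_
    rw [log_div (by linarith) (log_pos hL1).ne']
    linarith
  calc delay ε N ≤ M + 1 := delay_le hε0 hε1 (sqrt_nonneg _) hz htail hNz
    _ ≤ 10 * (L / log L) := by linarith [Nat.ceil_lt_add_one (by linarith : 0 ≤ 8 * (L / log L))]

lemma eventually_le_delay (hε0 : ∀ m, 0 ≤ ε m) (hε1 : ∀ m, ε m ≤ 1) {R : ℝ} (hR : 0 < R)
    (hup : ∀ m : ℕ, 4 * R ≤ m → ε m ≤ √(16 * R / m) ^ m)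
    (hlow : ∀ m M : ℕ, R ≤ M → m ≤ M → (R / (2 * M)) ^ M ≤ ε m) :
    ∀ᶠ N : ℕ in atTop, 1 / 8 * (log N / log (log N)) ≤ delay ε N := by
  have hL : ∀ᶠ L : ℝ in atTop, 0 < L ∧ 1 ≤ log L ∧ 4 * (R + 2) ≤ L / log L ∧
      -log (R / 2) ≤ 3 * log L :=
    (eventually_gt_atTop 0).and <| (tendsto_log_atTop.eventually_ge_atTop _).and <|
      (tendsto_div_log_atTop.eventually_ge_atTop _).and <|
      (tendsto_log_atTop.const_mul_atTop (by norm_num : (0 : ℝ) < 3)).eventually_ge_atTop _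
  filter_upwards [eventually_log_natCast hL] with N ⟨hL0, hL1, hr, hRL⟩
  set L := log N
  have hN : 0 < N := Nat.pos_of_ne_zero (by rintro rfl; norm_num [L] at hL0)
  set M := ⌊L / log L / 4⌋₊
  have hMle : (M : ℝ) ≤ L / log L / 4 := Nat.floor_le (by positivity)
  have hMgt : L / log L / 4 - 1 < M := Nat.sub_one_lt_floor _
  have hRM : R ≤ M := by linarith
  have hεN (m : ℕ) (hm : m ≤ M) : 1 / N ≤ ε m :=
    calc 1 / (N : ℝ) = exp (-L) := by rw [exp_neg, exp_log (by exact_mod_cast hN), one_div]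
      _ ≤ (R / (2 * M)) ^ M := exp_neg_le_div_two_mul_pow hR hL0 hL1
          (by exact_mod_cast (by linarith : (0 : ℝ) < M)) hMle hRL
      _ ≤ ε m := hlow m M hRM hm
  calc 1 / 8 * (L / log L) ≤ (M + 1) / 2 := by linarith
    _ ≤ delay ε N :=
      le_delay hε0 hε1 hN (summable_one_sub_one_sub_pow_of_le_sqrt_pow hε0 hε1 hR hup N) hεN

end Delay

/-- Let `(H_k)_{k≥1}` be i.i.d. unit-mean exponential random variables and `R̄ > 0`.
With `p_N(m) = 1 − ℙ(Σ_{k=1}^m log(1+H_k) > R̄)^N`, the average delay of incremental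
redundancy multicast `D(N) = Σ_{m=0}^∞ p_N(m)` satisfies `D(N) = Θ(log N / log log N)`. -/
theorem incremental_redundancy_delay_theta
    {Ω : Type*} [MeasurableSpace Ω] (P : Measure Ω) [IsProbabilityMeasure P]
    (H : ℕ → Ω → ℝ) (hmeas : ∀ k, Measurable (H k))
    (hindep : iIndepFun H P)
    (hdist : ∀ k, P.map (H k) = expMeasure 1)
    (R : ℝ) (hR : 0 < R) :
    ∃ c₁ c₂ : ℝ, ∃ N₀ : ℕ, 0 < c₁ ∧ c₁ ≤ c₂ ∧
      ∀ N : ℕ, N₀ ≤ N →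
        c₁ * (Real.log N / Real.log (Real.log N)) ≤
            (∑' m : ℕ, (1 -
              (P {ω | R < ∑ k ∈ Finset.Icc 1 m, Real.log (1 + H k ω)}).toReal ^ N)) ∧
          (∑' m : ℕ, (1 -
              (P {ω | R < ∑ k ∈ Finset.Icc 1 m, Real.log (1 + H k ω)}).toReal ^ N)) ≤
            c₂ * (Real.log N / Real.log (Real.log N)) := by
  have hε0 (m : ℕ) : 0 ≤ outageProb P H R m := measureReal_nonneg
  have hε1 (m : ℕ) : outageProb P H R m ≤ 1 := measureReal_le_one
  have hup (m : ℕ) (hm : 4 * R ≤ m) := outageProb_le_sqrt_pow hmeas hindep hdist hR hm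
  have hlow (m M : ℕ) (hRM : R ≤ M) (hm : m ≤ M) := pow_le_outageProb hmeas hindep hdist hR hRM hm
  have hD (N : ℕ) : ∑' m : ℕ, (1 -
      (P {ω | R < ∑ k ∈ Finset.Icc 1 m, Real.log (1 + H k ω)}).toReal ^ N) =
      delay (outageProb P H R) N := by
    simp_rw [← measureReal_def, measureReal_lt_sum_eq_one_sub_outageProb hmeas]
    rfl
  obtain ⟨N₀, hN₀⟩ := eventually_atTop.1 <|
    (eventually_le_delay hε0 hε1 hR hup hlow).and (eventually_delay_le hε0 hε1 hR hup)
  exact ⟨1 / 8, 10, N₀, by norm_num, by norm_num, fun N hN => by simpa only [hD] using hN₀ N hN⟩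
end

section
/- For each integer M ≥ 2 let F_M(x) = 1 − e^{−x} Σ_{j=0}^{M−1} x^j / j! for x ≥ 0 (the cumulative distribution function of a sum of M i.i.d. unit-mean exponential random variables). If (b_M) is a sequence of positive reals with F_M(b_M) = 1/M for every M, then b_M = Θ(M): there exist constants 0 < c₁ ≤ c₂ and M₀ such that c₁ M ≤ b_M ≤ c₂ M for all M ≥ M₀. -/
open Real Finset

/-!
Lower bound: `F_M(x)` is at most the first omitted term `x^M/M!` of the exponential series,
and `x^M/M! ≤ (e x/M)^M`, so `F_M(b_M) = 1/M` forces `e b_M/M ≥ e⁻¹`.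
Upper bound: as only powers `j < M` occur, `∑_{j<M} x^j/j! ≤ 2^M e^{x/2}`, hence
`1/2 ≤ 1 - F_M(x) ≤ 2^M e^{-x/2}`, which forces `x ≤ 2(M + 1)`.
-/

theorem exp_sub_sum_range_le_pow_div_factorial_mul_exp {x : ℝ} (hx : 0 ≤ x) (n : ℕ) :
    exp x - ∑ j ∈ range n, x ^ j / j.factorial ≤ x ^ n / n.factorial * exp x := by
  have hexp : HasSum (fun j : ℕ => x ^ j / j.factorial) (exp x) := by
    rw [exp_eq_exp_ℝ]
    exact NormedSpace.expSeries_div_hasSum_exp x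
  have hsplit : ∑ j ∈ range n, x ^ j / j.factorial
      + ∑' k : ℕ, x ^ (k + n) / (k + n).factorial = exp x := by
    rw [hexp.summable.sum_add_tsum_nat_add n, hexp.tsum_eq]
  -- `n! k! ∣ (k + n)!` bounds the tail termwise by `x^n/n!` times the full series.
  have htail : ∑' k : ℕ, x ^ (k + n) / (k + n).factorial
      ≤ ∑' k : ℕ, x ^ n / n.factorial * (x ^ k / k.factorial) := by
    refine (summable_nat_add_iff n |>.2 hexp.summable).tsum_le_tsum (fun k => ?_)
      (hexp.summable.mul_left _)
    have hfac : (n.factorial : ℝ) * k.factorial ≤ (k + n).factorial := by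
      exact_mod_cast Nat.le_of_dvd (Nat.factorial_pos _)
        (add_comm n k ▸ Nat.factorial_mul_factorial_dvd_factorial_add n k)
    calc x ^ (k + n) / (k + n).factorial
        ≤ x ^ (k + n) / (n.factorial * k.factorial) := by gcongr
      _ = x ^ n / n.factorial * (x ^ k / k.factorial) := by
        rw [pow_add, div_mul_div_comm, mul_comm (x ^ k)]
  rw [tsum_mul_left, hexp.tsum_eq] at htail
  linarith

noncomputable def gammaCDF (n : ℕ) (x : ℝ) : ℝ :=
  1 - exp (-x) * ∑ j ∈ range n, x ^ j / j.factorial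

theorem gammaCDF_le_pow_div_factorial {x : ℝ} (hx : 0 ≤ x) (n : ℕ) :
    gammaCDF n x ≤ x ^ n / n.factorial := by
  calc gammaCDF n x
      = exp (-x) * (exp x - ∑ j ∈ range n, x ^ j / j.factorial) := by
        rw [gammaCDF, mul_sub, ← exp_add, neg_add_cancel, exp_zero]
    _ ≤ exp (-x) * (x ^ n / n.factorial * exp x) := by
        gcongr
        exact exp_sub_sum_range_le_pow_div_factorial_mul_exp hx n
    _ = x ^ n / n.factorial := by
        rw [mul_left_comm, ← exp_add, neg_add_cancel, exp_zero, mul_one]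

theorem pow_div_factorial_le_exp_one_mul_div_pow {x : ℝ} (hx : 0 ≤ x) (n : ℕ) :
    x ^ n / n.factorial ≤ (exp 1 * x / n) ^ n := by
  rcases Nat.eq_zero_or_pos n with rfl | hn
  · simp
  have hn' : (0 : ℝ) < n := by exact_mod_cast hn
  calc x ^ n / n.factorial = (x / n) ^ n * ((n : ℝ) ^ n / n.factorial) := by
        rw [div_pow]
        field_simp
    _ ≤ (x / n) ^ n * exp 1 ^ n := by
        rw [exp_one_pow]
        gcongr
        exact pow_div_factorial_le_exp _ hn'.le n
    _ = (exp 1 * x / n) ^ n := by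
        rw [← mul_pow]
        ring

theorem exp_neg_one_le_of_inv_le_pow {n : ℕ} (hn : n ≠ 0) {y : ℝ} (hy : 0 ≤ y)
    (h : 1 / (n : ℝ) ≤ y ^ n) : exp (-1) ≤ y := by
  by_contra! hlt
  have hn' : (0 : ℝ) < n := by exact_mod_cast Nat.pos_of_ne_zero hn
  have hpow : y ^ n < exp (-n) := by
    simpa [← exp_nat_mul] using pow_lt_pow_left₀ hlt hy hn
  have hexp : exp (-n) < 1 / (n : ℝ) := by
    rw [exp_neg, one_div]
    exact inv_strictAnti₀ hn' (by linarith [add_one_le_exp (n : ℝ)])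
  linarith

theorem exp_neg_two_mul_le_of_inv_le_gammaCDF {n : ℕ} (hn : n ≠ 0) {x : ℝ} (hx : 0 ≤ x)
    (h : 1 / (n : ℝ) ≤ gammaCDF n x) : exp (-2) * n ≤ x := by
  have hn' : (0 : ℝ) < n := by exact_mod_cast Nat.pos_of_ne_zero hn
  have hy := exp_neg_one_le_of_inv_le_pow hn (by positivity)
    (h.trans <| (gammaCDF_le_pow_div_factorial hx n).trans
      (pow_div_factorial_le_exp_one_mul_div_pow hx n))
  rw [le_div_iff₀ hn'] at hy
  calc exp (-2) * n = exp (-1) * (exp (-1) * n) := by rw [← mul_assoc, ← exp_add]; norm_num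
    _ ≤ exp (-1) * (exp 1 * x) := by gcongr
    _ = x := by rw [← mul_assoc, ← exp_add]; norm_num

theorem sum_range_pow_div_factorial_le_pow_mul_exp_div {t x : ℝ} (ht : 1 ≤ t) (hx : 0 ≤ x)
    (n : ℕ) : ∑ j ∈ range n, x ^ j / j.factorial ≤ t ^ n * exp (x / t) := by
  have ht0 : 0 < t := by linarith
  calc ∑ j ∈ range n, x ^ j / j.factorial
      = ∑ j ∈ range n, t ^ j * ((x / t) ^ j / j.factorial) := by
        refine sum_congr rfl fun j _ => ?_
        rw [div_pow, mul_div_assoc', mul_div_cancel₀ _ (pow_pos ht0 j).ne']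
    _ ≤ ∑ j ∈ range n, t ^ n * ((x / t) ^ j / j.factorial) := by
        gcongr with j hj
        exact (mem_range.1 hj).le
    _ ≤ t ^ n * exp (x / t) := by
        rw [← mul_sum]
        gcongr
        exact sum_le_exp_of_nonneg (by positivity) n

theorem le_two_mul_add_one_of_gammaCDF_le_half {n : ℕ} {x : ℝ} (hx : 0 ≤ x)
    (h : gammaCDF n x ≤ 1 / 2) : x ≤ 2 * (n + 1) := by
  have hsum := sum_range_pow_div_factorial_le_pow_mul_exp_div one_le_two hx n
  have hhalf : 1 / 2 ≤ 2 ^ n * exp (-(x / 2)) :=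
    calc 1 / 2 ≤ exp (-x) * ∑ j ∈ range n, x ^ j / j.factorial := by
          rw [gammaCDF] at h
          linarith
      _ ≤ exp (-x) * (2 ^ n * exp (x / 2)) := by gcongr
      _ = 2 ^ n * exp (-(x / 2)) := by
        rw [mul_left_comm, ← exp_add]
        ring_nf
  have hexp : exp (x / 2) ≤ exp (n + 1) :=
    calc exp (x / 2) ≤ 2 ^ (n + 1) := by
          rw [exp_neg] at hhalf
          have := exp_pos (x / 2)
          rw [pow_succ]
          field_simp at hhalf
          linarith
      _ ≤ exp 1 ^ (n + 1) := by gcongr; exact exp_one_gt_two.le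
      _ = exp (n + 1) := by rw [exp_one_pow]; push_cast; ring_nf
  linarith [exp_le_exp.1 hexp]

/-- Let `F_M(x) = 1 − e^{−x} Σ_{j=0}^{M−1} x^j/j!` (Gamma(M,1) cdf). If `(b_M)` are
positive reals with `F_M(b_M) = 1/M` for every `M ≥ 2`, then `b_M = Θ(M)`. -/
theorem gamma_lower_quantile_theta (b : ℕ → ℝ)
    (hbpos : ∀ M : ℕ, 2 ≤ M → 0 < b M)
    (hquant : ∀ M : ℕ, 2 ≤ M →
      1 - Real.exp (-(b M)) * ∑ j ∈ Finset.range M, (b M) ^ j / (Nat.factorial j : ℝ)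
        = 1 / (M : ℝ)) :
    ∃ c₁ c₂ : ℝ, ∃ M₀ : ℕ, 0 < c₁ ∧ c₁ ≤ c₂ ∧
      ∀ M : ℕ, M₀ ≤ M → c₁ * (M : ℝ) ≤ b M ∧ b M ≤ c₂ * (M : ℝ) := by
  have hc : exp (-2) ≤ 3 := (exp_le_one_iff.2 (by norm_num)).trans (by norm_num)
  refine ⟨exp (-2), 3, 2, exp_pos _, hc, fun M hM => ⟨?_, ?_⟩⟩
  · exact exp_neg_two_mul_le_of_inv_le_gammaCDF (by omega)
      (hbpos M hM).le (hquant M hM).ge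
  · have hM₂ : (2 : ℝ) ≤ M := by exact_mod_cast hM
    have hinv : 1 / (M : ℝ) ≤ 1 / 2 := one_div_le_one_div_of_le two_pos hM₂
    have := le_two_mul_add_one_of_gammaCDF_le_half (hbpos M hM).le
      ((hquant M hM).trans_le hinv)
    linarith
end

section
/- Fix a real P > 0. For each integer M ≥ 1 let F_M(x) = 1 − e^{−x} Σ_{j=0}^{M−1} x^j / j! and f_M(x) = e^{−x} x^{M−1}/(M−1)! for x ≥ 0. Then there exist constants 0 < c₁ ≤ c₂ and M₀ such that for all M ≥ M₀: c₁ ≤ ∫_0^∞ log(1 + Px/M) · M (1−F_M(x))^{M−1} f_M(x) dx ≤ c₂. That is, the expected rate of the cooperative second stage, E[log(1 + (P/M)·min_{i≤M} χ_i)] with χ_1,…,χ_M i.i.d. with distribution F_M, is Θ(1) in M. -/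
/-!
With `S_M = 1 - F_M`, the density of the minimum is `M S_M^{M-1} f_M = -(S_M^M)'`, so its tail
integrals are values of `S_M^M`; likewise `∫_a^∞ f_M = S_M(a)`.

Lower bound: by Bernoulli's inequality and `F_M(a) ≤ a^M / M!`, the minimum exceeds `M/4` with
probability `S_M(M/4)^M ≥ 1 - M (e/4)^M`, and beyond `M/4` the rate is at least `log (1 + P/4)`.

Upper bound: below `2M` the rate is at most `log (1 + 2P)`. Above `2M`, `log (1 + y) ≤ y` and
`S_M ≤ 1` bound the integrand by `P x f_M(x) = P M f_{M+1}(x)`, whose tail is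
`P M S_{M+1}(2M) ≤ 2 P M (2/e)^M` by the Chernoff bound `S_M(x) ≤ 2^M e^{-x/2}`.
-/

open Real Set Finset

open MeasureTheory Filter Topology
open scoped Nat

noncomputable section

/-- `1 - F_M`: the survival function of a sum of `M` i.i.d. unit-mean exponentials. -/
def erlangSurvival (M : ℕ) (x : ℝ) : ℝ := exp (-x) * ∑ j ∈ range M, x ^ j / j !

def erlangDensity (M : ℕ) (x : ℝ) : ℝ := exp (-x) * x ^ (M - 1) / (M - 1)!

def minErlangDensity (M : ℕ) (x : ℝ) : ℝ :=
  M * erlangSurvival M x ^ (M - 1) * erlangDensity M x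

def rateIntegrand (P : ℝ) (M : ℕ) (x : ℝ) : ℝ := log (1 + P * x / M) * minErlangDensity M x

def secondStageRate (P : ℝ) (M : ℕ) : ℝ := ∫ x in Ioi 0, rateIntegrand P M x

end

theorem hasDerivAt_pow_succ_div_factorial (m : ℕ) (x : ℝ) :
    HasDerivAt (fun y : ℝ => y ^ (m + 1) / (m + 1)!) (x ^ m / m !) x := by
  refine ((hasDerivAt_pow (m + 1) x).div_const ((m + 1)! : ℝ)).congr_deriv ?_
  rw [Nat.factorial_succ]
  push_cast
  field_simp

theorem hasDerivAt_sum_range_pow_div_factorial (x : ℝ) : ∀ m : ℕ,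
    HasDerivAt (fun y : ℝ => ∑ j ∈ range (m + 1), y ^ j / j !)
      (∑ j ∈ range m, x ^ j / j !) x
  | 0 => by simpa using hasDerivAt_const x (1 : ℝ)
  | m + 1 => by
    simpa only [sum_range_succ _ (m + 1), sum_range_succ _ m] using
      (hasDerivAt_sum_range_pow_div_factorial x m).fun_add (hasDerivAt_pow_succ_div_factorial m x)

theorem integrableOn_Ioi_of_hasDerivAt_neg {G g : ℝ → ℝ} {a : ℝ}
    (hderiv : ∀ x ∈ Ici a, HasDerivAt G (-g x) x) (hg : ∀ x ∈ Ioi a, 0 ≤ g x)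
    (hG : Tendsto G atTop (𝓝 0)) : IntegrableOn g (Ioi a) :=
  integrableOn_Ioi_deriv_of_nonneg' (g := fun x => -G x) (l := 0)
    (fun x hx => by simpa using (hderiv x hx).fun_neg) hg (by simpa using hG.neg)

theorem integral_Ioi_of_hasDerivAt_neg {G g : ℝ → ℝ} {a : ℝ}
    (hderiv : ∀ x ∈ Ici a, HasDerivAt G (-g x) x) (hg : ∀ x ∈ Ioi a, 0 ≤ g x)
    (hG : Tendsto G atTop (𝓝 0)) : ∫ x in Ioi a, g x = G a := by
  simpa using integral_Ioi_of_hasDerivAt_of_nonneg' (g := fun x => -G x) (l := 0)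
    (fun x hx => by simpa using (hderiv x hx).fun_neg) hg (by simpa using hG.neg)

section Erlang

variable {M : ℕ} {x a : ℝ}

theorem continuous_erlangSurvival (M : ℕ) : Continuous (erlangSurvival M) := by
  unfold erlangSurvival; fun_prop

theorem continuous_erlangDensity (M : ℕ) : Continuous (erlangDensity M) := by
  unfold erlangDensity; fun_prop

theorem erlangSurvival_nonneg (M : ℕ) (hx : 0 ≤ x) : 0 ≤ erlangSurvival M x := by
  unfold erlangSurvival; positivity

theorem erlangSurvival_le_one (M : ℕ) (hx : 0 ≤ x) : erlangSurvival M x ≤ 1 :=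
  calc erlangSurvival M x ≤ exp (-x) * exp x := by
        unfold erlangSurvival; gcongr; exact sum_le_exp_of_nonneg hx M
    _ = 1 := by rw [← exp_add, neg_add_cancel, exp_zero]

theorem erlangSurvival_zero (hM : M ≠ 0) : erlangSurvival M 0 = 1 := by
  obtain ⟨m, rfl⟩ := Nat.exists_eq_succ_of_ne_zero hM
  simp [erlangSurvival, sum_range_succ']

theorem erlangDensity_nonneg (M : ℕ) (hx : 0 ≤ x) : 0 ≤ erlangDensity M x := by
  unfold erlangDensity; positivity

theorem minErlangDensity_nonneg (M : ℕ) (hx : 0 ≤ x) : 0 ≤ minErlangDensity M x := by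
  unfold minErlangDensity
  have := erlangSurvival_nonneg M hx
  have := erlangDensity_nonneg M hx
  positivity

theorem erlangSurvival_le_two_pow_mul_exp (M : ℕ) (hx : 0 ≤ x) :
    erlangSurvival M x ≤ 2 ^ M * exp (-(x / 2)) := by
  have hsum : ∑ j ∈ range M, x ^ j / j ! ≤ 2 ^ M * exp (x / 2) :=
    calc ∑ j ∈ range M, x ^ j / j ! = ∑ j ∈ range M, 2 ^ j * ((x / 2) ^ j / j !) := by
          refine sum_congr rfl fun j _ => ?_
          rw [div_pow]; field_simp
      _ ≤ ∑ j ∈ range M, 2 ^ M * ((x / 2) ^ j / j !) := by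
          gcongr with j hj
          · norm_num
          · exact (mem_range.mp hj).le
      _ ≤ 2 ^ M * exp (x / 2) := by
          rw [← mul_sum]; gcongr; exact sum_le_exp_of_nonneg (by positivity) M
  calc erlangSurvival M x ≤ exp (-x) * (2 ^ M * exp (x / 2)) := by
        unfold erlangSurvival; gcongr
    _ = 2 ^ M * exp (-(x / 2)) := by
        rw [mul_left_comm, ← exp_add]; ring_nf

theorem tendsto_erlangSurvival_atTop (M : ℕ) : Tendsto (erlangSurvival M) atTop (𝓝 0) := by
  have hbound : Tendsto (fun x : ℝ => 2 ^ M * exp (-(x / 2))) atTop (𝓝 0) := by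
    simpa using (tendsto_exp_neg_atTop_nhds_zero.comp
      (tendsto_id.atTop_div_const (by norm_num : (0 : ℝ) < 2))).const_mul (2 ^ M)
  refine tendsto_of_tendsto_of_tendsto_of_le_of_le' tendsto_const_nhds hbound ?_ ?_
  · filter_upwards [eventually_ge_atTop 0] with x hx using erlangSurvival_nonneg M hx
  · filter_upwards [eventually_ge_atTop 0] with x hx
      using erlangSurvival_le_two_pow_mul_exp M hx

theorem hasDerivAt_erlangSurvival (hM : M ≠ 0) (x : ℝ) :
    HasDerivAt (erlangSurvival M) (-erlangDensity M x) x := by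
  obtain ⟨m, rfl⟩ := Nat.exists_eq_succ_of_ne_zero hM
  refine ((hasDerivAt_neg x).exp.fun_mul
    (hasDerivAt_sum_range_pow_div_factorial x m)).congr_deriv ?_
  simp only [erlangDensity, sum_range_succ, Nat.succ_sub_one]
  ring

theorem one_sub_erlangSurvival_le (hM : M ≠ 0) (ha : 0 ≤ a) :
    1 - erlangSurvival M a ≤ a ^ M / M ! := by
  obtain ⟨m, rfl⟩ := Nat.exists_eq_succ_of_ne_zero hM
  refine image_le_of_deriv_right_le_deriv_boundary (f := fun x => 1 - erlangSurvival (m + 1) x)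
    (f' := erlangDensity (m + 1)) (B := fun x : ℝ => x ^ (m + 1) / (m + 1)!)
    (B' := fun x => x ^ m / m !)
    (continuous_const.sub (continuous_erlangSurvival _)).continuousOn (fun x _ => ?_)
    (by simp [erlangSurvival_zero]) (by fun_prop)
    (fun x _ => (hasDerivAt_pow_succ_div_factorial m x).hasDerivWithinAt) (fun x hx => ?_)
    ⟨ha, le_rfl⟩
  · simpa using ((hasDerivAt_erlangSurvival hM x).const_sub 1).hasDerivWithinAt
  · simp only [erlangDensity, Nat.succ_sub_one, mul_div_assoc]
    have : 0 ≤ x ^ m / m ! := by have := hx.1; positivity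
    exact mul_le_of_le_one_left this (exp_le_one_iff.mpr (by linarith [hx.1]))

theorem mul_erlangDensity (hM : M ≠ 0) (x : ℝ) :
    x * erlangDensity M x = M * erlangDensity (M + 1) x := by
  obtain ⟨m, rfl⟩ := Nat.exists_eq_succ_of_ne_zero hM
  simp only [erlangDensity, Nat.succ_sub_one, Nat.factorial_succ]
  push_cast
  field_simp
  ring

theorem integrableOn_Ioi_erlangDensity (hM : M ≠ 0) (ha : 0 ≤ a) :
    IntegrableOn (erlangDensity M) (Ioi a) :=
  integrableOn_Ioi_of_hasDerivAt_neg (fun _ _ => hasDerivAt_erlangSurvival hM _)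
    (fun _ hx => erlangDensity_nonneg M (ha.trans hx.le)) (tendsto_erlangSurvival_atTop M)

theorem integral_Ioi_erlangDensity (hM : M ≠ 0) (ha : 0 ≤ a) :
    ∫ x in Ioi a, erlangDensity M x = erlangSurvival M a :=
  integral_Ioi_of_hasDerivAt_neg (fun _ _ => hasDerivAt_erlangSurvival hM _)
    (fun _ hx => erlangDensity_nonneg M (ha.trans hx.le)) (tendsto_erlangSurvival_atTop M)

theorem div_four_pow_div_factorial_le (M : ℕ) :
    ((M : ℝ) / 4) ^ M / M ! ≤ (exp 1 / 4) ^ M := by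
  rw [div_pow, div_pow, div_right_comm, ← exp_nat_mul, mul_one]
  gcongr
  exact pow_div_factorial_le_exp _ M.cast_nonneg M

theorem erlangSurvival_succ_two_mul_le (M : ℕ) :
    erlangSurvival (M + 1) (2 * M) ≤ 2 * (2 / exp 1) ^ M := by
  refine (erlangSurvival_le_two_pow_mul_exp (M + 1) (by positivity)).trans_eq ?_
  rw [div_pow, ← exp_nat_mul, mul_one, exp_neg, mul_div_cancel_left₀ _ two_ne_zero, pow_succ]
  ring

end Erlang

section MinErlang

variable {M : ℕ} {x a : ℝ}

theorem hasDerivAt_erlangSurvival_pow (hM : M ≠ 0) (x : ℝ) :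
    HasDerivAt (fun y => erlangSurvival M y ^ M) (-minErlangDensity M x) x := by
  refine ((hasDerivAt_erlangSurvival hM x).pow M).congr_deriv ?_
  simp only [minErlangDensity]
  ring

theorem tendsto_erlangSurvival_pow_atTop (hM : M ≠ 0) :
    Tendsto (fun y => erlangSurvival M y ^ M) atTop (𝓝 0) := by
  simpa [zero_pow hM] using (tendsto_erlangSurvival_atTop M).pow M

theorem integrableOn_Ioi_minErlangDensity (hM : M ≠ 0) (ha : 0 ≤ a) :
    IntegrableOn (minErlangDensity M) (Ioi a) :=
  integrableOn_Ioi_of_hasDerivAt_neg (fun _ _ => hasDerivAt_erlangSurvival_pow hM _)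
    (fun _ hx => minErlangDensity_nonneg M (ha.trans hx.le))
    (tendsto_erlangSurvival_pow_atTop hM)

theorem integral_Ioi_minErlangDensity (hM : M ≠ 0) (ha : 0 ≤ a) :
    ∫ x in Ioi a, minErlangDensity M x = erlangSurvival M a ^ M :=
  integral_Ioi_of_hasDerivAt_neg (fun _ _ => hasDerivAt_erlangSurvival_pow hM _)
    (fun _ hx => minErlangDensity_nonneg M (ha.trans hx.le))
    (tendsto_erlangSurvival_pow_atTop hM)

theorem minErlangDensity_le_mul_erlangDensity (hx : 0 ≤ x) :
    minErlangDensity M x ≤ M * erlangDensity M x := by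
  rw [minErlangDensity, mul_assoc]
  gcongr
  exact mul_le_of_le_one_left (erlangDensity_nonneg M hx)
    (pow_le_one₀ (erlangSurvival_nonneg M hx) (erlangSurvival_le_one M hx))

theorem one_sub_mul_le_erlangSurvival_pow (hM : M ≠ 0) (ha : 0 ≤ a) :
    1 - M * (a ^ M / M !) ≤ erlangSurvival M a ^ M := by
  have := one_add_mul_sub_le_pow (a := erlangSurvival M a)
    (by linarith [erlangSurvival_nonneg M ha]) M
  nlinarith [one_sub_erlangSurvival_le hM ha, (M.cast_nonneg : (0 : ℝ) ≤ M)]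

end MinErlang

section Rate

variable {M : ℕ} {P x : ℝ}

theorem log_one_add_mul_div_nonneg (hP : 0 ≤ P) (hx : 0 ≤ x) : 0 ≤ log (1 + P * x / M) :=
  log_nonneg (le_add_of_nonneg_right (by positivity))

theorem rateIntegrand_nonneg (hP : 0 ≤ P) (hx : 0 ≤ x) : 0 ≤ rateIntegrand P M x :=
  mul_nonneg (log_one_add_mul_div_nonneg hP hx) (minErlangDensity_nonneg M hx)

theorem rateIntegrand_le_mul_erlangDensity_succ (hP : 0 ≤ P) (hM : M ≠ 0) (hx : 0 ≤ x) :
    rateIntegrand P M x ≤ P * M * erlangDensity (M + 1) x := by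
  have hlog : log (1 + P * x / M) ≤ P * x / M := by
    have : 0 ≤ P * x / M := by positivity
    linarith [log_le_sub_one_of_pos (by linarith : 0 < 1 + P * x / M)]
  calc rateIntegrand P M x ≤ P * x / M * (M * erlangDensity M x) :=
        mul_le_mul hlog (minErlangDensity_le_mul_erlangDensity hx)
          (minErlangDensity_nonneg M hx) (by positivity)
    _ = P * (x * erlangDensity M x) := by field_simp
    _ = P * M * erlangDensity (M + 1) x := by rw [mul_erlangDensity hM]; ring

theorem integrableOn_rateIntegrand (hP : 0 ≤ P) (hM : M ≠ 0) :
    IntegrableOn (rateIntegrand P M) (Ioi 0) := by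
  refine ((integrableOn_Ioi_erlangDensity M.succ_ne_zero le_rfl).const_mul (P * M)).mono' ?_ ?_
  · unfold rateIntegrand minErlangDensity erlangSurvival erlangDensity
    exact Measurable.aestronglyMeasurable (by fun_prop)
  · filter_upwards [ae_restrict_mem measurableSet_Ioi] with x hx
    rw [Real.norm_of_nonneg (rateIntegrand_nonneg hP hx.le)]
    exact rateIntegrand_le_mul_erlangDensity_succ hP hM hx.le

end Rate

section RateBounds

variable {M : ℕ} {P : ℝ}

theorem log_mul_erlangSurvival_pow_le_secondStageRate (hP : 0 ≤ P) (hM : M ≠ 0) {a : ℝ}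
    (ha : 0 ≤ a) : log (1 + P * a / M) * erlangSurvival M a ^ M ≤ secondStageRate P M := by
  have hint := integrableOn_rateIntegrand hP hM
  calc log (1 + P * a / M) * erlangSurvival M a ^ M
      = ∫ x in Ioi a, log (1 + P * a / M) * minErlangDensity M x := by
        rw [integral_const_mul, integral_Ioi_minErlangDensity hM ha]
    _ ≤ ∫ x in Ioi a, rateIntegrand P M x := by
        refine setIntegral_mono_on ((integrableOn_Ioi_minErlangDensity hM ha).const_mul _)
          (hint.mono_set (Ioi_subset_Ioi ha)) measurableSet_Ioi fun x hx => ?_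
        have hx : a ≤ x := (mem_Ioi.mp hx).le
        refine mul_le_mul_of_nonneg_right ?_ (minErlangDensity_nonneg M (ha.trans hx))
        gcongr
    _ ≤ secondStageRate P M := by
        refine setIntegral_mono_set hint ?_ (Ioi_subset_Ioi ha).eventuallyLE
        filter_upwards [ae_restrict_mem measurableSet_Ioi] with x hx
        exact rateIntegrand_nonneg hP (le_of_lt hx)

theorem secondStageRate_le_log_add_mul_erlangSurvival (hP : 0 ≤ P) (hM : M ≠ 0) {b : ℝ}
    (hb : 0 ≤ b) :
    secondStageRate P M ≤ log (1 + P * b / M) + P * M * erlangSurvival (M + 1) b := by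
  have hint := integrableOn_rateIntegrand hP hM
  have hlog : 0 ≤ log (1 + P * b / M) := log_one_add_mul_div_nonneg hP hb
  have hbody : ∫ x in Ioc 0 b, rateIntegrand P M x ≤ log (1 + P * b / M) :=
    calc ∫ x in Ioc 0 b, rateIntegrand P M x
        ≤ ∫ x in Ioc 0 b, log (1 + P * b / M) * minErlangDensity M x := by
          refine setIntegral_mono_on (hint.mono_set Ioc_subset_Ioi_self)
            (((integrableOn_Ioi_minErlangDensity hM le_rfl).mono_set
              Ioc_subset_Ioi_self).const_mul _)
            measurableSet_Ioc fun x ⟨hx₀, hxb⟩ => ?_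
          refine mul_le_mul_of_nonneg_right ?_ (minErlangDensity_nonneg M hx₀.le)
          have := hx₀.le
          gcongr
      _ ≤ ∫ x in Ioi 0, log (1 + P * b / M) * minErlangDensity M x := by
          refine setIntegral_mono_set ((integrableOn_Ioi_minErlangDensity hM le_rfl).const_mul _)
            ?_ Ioc_subset_Ioi_self.eventuallyLE
          filter_upwards [ae_restrict_mem measurableSet_Ioi] with x hx
          exact mul_nonneg hlog (minErlangDensity_nonneg M (le_of_lt hx))
      _ = log (1 + P * b / M) := by
          rw [integral_const_mul, integral_Ioi_minErlangDensity hM le_rfl, erlangSurvival_zero hM,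
            one_pow, mul_one]
  have htail : ∫ x in Ioi b, rateIntegrand P M x ≤ P * M * erlangSurvival (M + 1) b :=
    calc ∫ x in Ioi b, rateIntegrand P M x ≤ ∫ x in Ioi b, P * M * erlangDensity (M + 1) x :=
          setIntegral_mono_on (hint.mono_set (Ioi_subset_Ioi hb))
            ((integrableOn_Ioi_erlangDensity M.succ_ne_zero hb).const_mul _) measurableSet_Ioi
            fun x hx => rateIntegrand_le_mul_erlangDensity_succ hP hM (hb.trans (le_of_lt hx))
      _ = P * M * erlangSurvival (M + 1) b := by
          rw [integral_const_mul, integral_Ioi_erlangDensity M.succ_ne_zero hb]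
  calc secondStageRate P M
      = (∫ x in Ioc 0 b, rateIntegrand P M x) + ∫ x in Ioi b, rateIntegrand P M x := by
        rw [secondStageRate, ← setIntegral_union (Ioc_disjoint_Ioi le_rfl) measurableSet_Ioi
          (hint.mono_set Ioc_subset_Ioi_self) (hint.mono_set (Ioi_subset_Ioi hb)),
          Ioc_union_Ioi_eq_Ioi hb]
    _ ≤ _ := add_le_add hbody htail

theorem log_one_add_div_four_mul_le_secondStageRate (hP : 0 ≤ P) (hM : M ≠ 0) :
    log (1 + P / 4) * (1 - M * (exp 1 / 4) ^ M) ≤ secondStageRate P M := by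
  have hsurv : 1 - M * (exp 1 / 4) ^ M ≤ erlangSurvival M (M / 4) ^ M := by
    refine le_trans ?_ (one_sub_mul_le_erlangSurvival_pow hM (by positivity))
    gcongr
    exact div_four_pow_div_factorial_le M
  calc log (1 + P / 4) * (1 - M * (exp 1 / 4) ^ M)
      ≤ log (1 + P / 4) * erlangSurvival M (M / 4) ^ M := by
        gcongr
        exact log_nonneg (by linarith)
    _ = log (1 + P * (M / 4) / M) * erlangSurvival M (M / 4) ^ M := by
        field_simp
    _ ≤ secondStageRate P M := log_mul_erlangSurvival_pow_le_secondStageRate hP hM (by positivity)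

theorem secondStageRate_le_log_one_add_two_mul_add (hP : 0 ≤ P) (hM : M ≠ 0) :
    secondStageRate P M ≤ log (1 + 2 * P) + 2 * P * (M * (2 / exp 1) ^ M) := by
  have hM' : (M : ℝ) ≠ 0 := by positivity
  refine (secondStageRate_le_log_add_mul_erlangSurvival hP hM
    (by positivity : (0 : ℝ) ≤ 2 * M)).trans ?_
  rw [mul_div_assoc, mul_div_cancel_right₀ _ hM', mul_comm P 2]
  have h := erlangSurvival_succ_two_mul_le M
  have : P * M * erlangSurvival (M + 1) (2 * M) ≤ P * M * (2 * (2 / exp 1) ^ M) := by gcongr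
  linarith

end RateBounds

theorem eventually_mul_pow_le {r ε : ℝ} (hr₀ : 0 ≤ r) (hr₁ : r < 1) (hε : 0 < ε) :
    ∀ᶠ M : ℕ in atTop, M * r ^ M ≤ ε :=
  (tendsto_self_mul_const_pow_of_lt_one hr₀ hr₁).eventually (ge_mem_nhds hε)

/-- Fix `P > 0`. With `F_M(x) = 1 − e^{−x} Σ_{j<M} x^j/j!` and
`f_M(x) = e^{−x} x^{M−1}/(M−1)!`, the expected rate of the cooperative second stage,
`∫_0^∞ log(1+Px/M) · M (1−F_M(x))^{M−1} f_M(x) dx`, is `Θ(1)` in `M`. -/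
theorem cooperative_second_stage_rate_theta (P : ℝ) (hP : 0 < P) :
    ∃ c₁ c₂ : ℝ, ∃ M₀ : ℕ, 0 < c₁ ∧ c₁ ≤ c₂ ∧
      ∀ M : ℕ, M₀ ≤ M →
        c₁ ≤ (∫ x in Ioi (0 : ℝ), Real.log (1 + P * x / (M : ℝ)) *
              ((M : ℝ) *
                (1 - (1 - Real.exp (-x) *
                  ∑ j ∈ Finset.range M, x ^ j / (Nat.factorial j : ℝ))) ^ (M - 1) *
                (Real.exp (-x) * x ^ (M - 1) / (Nat.factorial (M - 1) : ℝ)))) ∧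
          (∫ x in Ioi (0 : ℝ), Real.log (1 + P * x / (M : ℝ)) *
              ((M : ℝ) *
                (1 - (1 - Real.exp (-x) *
                  ∑ j ∈ Finset.range M, x ^ j / (Nat.factorial j : ℝ))) ^ (M - 1) *
                (Real.exp (-x) * x ^ (M - 1) / (Nat.factorial (M - 1) : ℝ)))) ≤ c₂ := by
  -- the integrands are now `rateIntegrand P M x` by definition
  simp only [sub_sub_cancel]
  have hlog : 0 < log (1 + P / 4) := log_pos (by linarith)
  have hlog_mono : log (1 + P / 4) ≤ log (1 + 2 * P) := log_le_log (by linarith) (by linarith)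
  have he₄ : exp 1 / 4 < 1 := by linarith [exp_one_lt_d9]
  have he₂ : 2 / exp 1 < 1 := by rw [div_lt_one (exp_pos 1)]; linarith [exp_one_gt_d9]
  obtain ⟨M₀, hM₀⟩ := (eventually_ge_atTop 1 |>.and <|
    (eventually_mul_pow_le (by positivity) he₄ (by norm_num : (0 : ℝ) < 1 / 4)).and
      (eventually_mul_pow_le (by positivity) he₂ one_pos)).exists_forall_of_atTop
  refine ⟨3 / 4 * log (1 + P / 4), log (1 + 2 * P) + 2 * P, M₀, by positivity, by nlinarith,
    fun M hM => ?_⟩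
  obtain ⟨hM1, hlower, hupper⟩ := hM₀ M hM
  have hM : M ≠ 0 := Nat.one_le_iff_ne_zero.mp hM1
  constructor
  · calc 3 / 4 * log (1 + P / 4) ≤ log (1 + P / 4) * (1 - M * (exp 1 / 4) ^ M) := by nlinarith
      _ ≤ secondStageRate P M := log_one_add_div_four_mul_le_secondStageRate hP.le hM
  · calc secondStageRate P M ≤ log (1 + 2 * P) + 2 * P * (M * (2 / exp 1) ^ M) :=
          secondStageRate_le_log_one_add_two_mul_add hP.le hM
      _ ≤ log (1 + 2 * P) + 2 * P := by nlinarith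
end

section
/- Fix an integer L ≥ 1 and let F(x) = 1 − e^{−Lx} Σ_{k=0}^{L−1} (Lx)^k / k! for x ≥ 0. If (a_N) is a sequence of positive reals with F(a_N) = 1 − 1/N for all integers N ≥ 2, then a_N = (log N + (L−1) log log N)/L + O(log log N): there exist a constant C and N₀ such that |a_N − (log N + (L−1)·log log N)/L| ≤ C · log log N for all N ≥ N₀. -/
open Real Finset

set_option maxHeartbeats 1000000 in
/-- Fix `L ≥ 1`, `F(x) = 1 − e^{−Lx} Σ_{k<L} (Lx)^k/k!`. If `(a_N)` are positive reals
with `F(a_N) = 1 − 1/N` for all `N ≥ 2`, then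
`a_N = (log N + (L−1) log log N)/L + O(log log N)`. -/
theorem chi_square_upper_quantile_asymptotics (L : ℕ) (hL : 1 ≤ L)
    (a : ℕ → ℝ) (hapos : ∀ N : ℕ, 2 ≤ N → 0 < a N)
    (hquant : ∀ N : ℕ, 2 ≤ N →
      1 - Real.exp (-(L : ℝ) * a N) *
          ∑ k ∈ Finset.range L, ((L : ℝ) * a N) ^ k / (Nat.factorial k : ℝ)
        = 1 - 1 / (N : ℝ)) :
    ∃ C : ℝ, ∃ N₀ : ℕ, ∀ N : ℕ, N₀ ≤ N →
      |a N - (Real.log N + ((L : ℝ) - 1) * Real.log (Real.log N)) / L| ≤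
        C * Real.log (Real.log N) := by
  have hLr1 : (1 : ℝ) ≤ (L : ℝ) := by exact_mod_cast hL
  have hLrpos : (0 : ℝ) < (L : ℝ) := lt_of_lt_of_le one_pos hLr1
  set K : ℝ := (L : ℝ) * (Nat.factorial (L - 1) : ℝ) * 2 ^ (L - 1) with hKdef
  have hfac1 : (1 : ℝ) ≤ (Nat.factorial (L - 1) : ℝ) := by
    exact_mod_cast Nat.one_le_iff_ne_zero.mpr (Nat.factorial_ne_zero _)
  have h2pow : (1 : ℝ) ≤ (2 : ℝ) ^ (L - 1) := one_le_pow₀ (by norm_num)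
  have hK1 : (1 : ℝ) ≤ K := by
    have := mul_le_mul hLr1 hfac1 (by norm_num) (le_of_lt hLrpos)
    nlinarith
  have hlogK : (0 : ℝ) ≤ Real.log K := Real.log_nonneg hK1
  set R : ℝ := max (2 + 2 * Real.log K) (Real.exp (max 1 (Real.log L))) with hRdef
  refine ⟨2 * (L : ℝ), ⌈Real.exp R⌉₊ + 2, fun N hN => ?_⟩
  have hN2 : 2 ≤ N := le_trans (by omega) hN
  have hNpos : (0 : ℝ) < (N : ℝ) := by positivity
  have hexpRN : Real.exp R ≤ (N : ℝ) := by
    calc Real.exp R ≤ (⌈Real.exp R⌉₊ : ℝ) := Nat.le_ceil _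
    _ ≤ (N : ℝ) := by exact_mod_cast Nat.le_of_add_right_le hN
  have hRlg : R ≤ Real.log N := (Real.le_log_iff_exp_le hNpos).mpr hexpRN
  set lg : ℝ := Real.log N with hlgdef
  set ll : ℝ := Real.log lg with hlldef
  have hlg2 : 2 + 2 * Real.log K ≤ lg := le_trans (le_max_left _ _) hRlg
  have hlg1 : (1 : ℝ) ≤ lg := by linarith
  have hlgpos : (0 : ℝ) < lg := by linarith
  have hllmax : max 1 (Real.log L) ≤ ll := by
    have h1 : Real.exp (max 1 (Real.log L)) ≤ lg := le_trans (le_max_right _ _) hRlg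
    have := Real.log_le_log (Real.exp_pos _) h1
    rwa [Real.log_exp] at this
  have hll1 : (1 : ℝ) ≤ ll := le_trans (le_max_left _ _) hllmax
  have hllL : Real.log L ≤ ll := le_trans (le_max_right _ _) hllmax
  have hllpos : (0 : ℝ) < ll := by linarith
  set T : ℝ := (L : ℝ) * a N with hTdef
  have hTpos : 0 < T := mul_pos hLrpos (hapos N hN2)
  set S : ℝ := ∑ k ∈ Finset.range L, T ^ k / (Nat.factorial k : ℝ) with hSdef
  have hq : Real.exp (-T) * S = 1 / (N : ℝ) := by
    have := hquant N hN2
    rw [hSdef, hTdef]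
    rw [neg_mul] at this
    linarith
  have hS1 : (1 : ℝ) ≤ S := by
    have h0 : (0 : ℕ) ∈ Finset.range L := Finset.mem_range.mpr (by omega)
    have := Finset.single_le_sum (f := fun k => T ^ k / (Nat.factorial k : ℝ))
      (fun k _ => by positivity) h0
    simpa using this
  -- lower bound: lg ≤ T
  have hexpnegT : Real.exp (-T) ≤ 1 / (N : ℝ) := by
    calc Real.exp (-T) = Real.exp (-T) * 1 := (mul_one _).symm
    _ ≤ Real.exp (-T) * S := by
        exact mul_le_mul_of_nonneg_left hS1 (Real.exp_pos _).le
    _ = 1 / (N : ℝ) := hq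
  have hNexpT : (N : ℝ) ≤ Real.exp T := by
    rw [Real.exp_neg] at hexpnegT
    rw [inv_eq_one_div] at hexpnegT
    exact le_of_one_div_le_one_div (Real.exp_pos _) hexpnegT |>.trans (le_refl _)
  have hTlow : lg ≤ T := by
    rw [hlgdef, Real.log_le_iff_le_exp hNpos]
    exact hNexpT
  have hT1 : (1 : ℝ) ≤ T := le_trans hlg1 hTlow
  -- S ≤ L * T^(L-1)
  have hSle : S ≤ (L : ℝ) * T ^ (L - 1) := by
    rw [hSdef]
    calc ∑ k ∈ Finset.range L, T ^ k / (Nat.factorial k : ℝ)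
        ≤ ∑ _k ∈ Finset.range L, T ^ (L - 1) := by
          refine Finset.sum_le_sum fun k hk => ?_
          have hk' : k ≤ L - 1 := by
            have := Finset.mem_range.mp hk; omega
          have h1 : T ^ k ≤ T ^ (L - 1) := pow_le_pow_right₀ hT1 hk'
          have h2 : (1 : ℝ) ≤ (Nat.factorial k : ℝ) := by
            exact_mod_cast Nat.one_le_iff_ne_zero.mpr (Nat.factorial_ne_zero _)
          calc T ^ k / (Nat.factorial k : ℝ) ≤ T ^ k / 1 := by
                exact div_le_div_of_nonneg_left (by positivity) one_pos h2
          _ = T ^ k := div_one _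
          _ ≤ T ^ (L - 1) := h1
    _ = (L : ℝ) * T ^ (L - 1) := by
          rw [Finset.sum_const, Finset.card_range, nsmul_eq_mul]
  -- T^(L-1) ≤ (L-1)! * 2^(L-1) * exp(T/2)
  have hTpow : T ^ (L - 1) ≤ (Nat.factorial (L - 1) : ℝ) * 2 ^ (L - 1) * Real.exp (T / 2) := by
    have h := Real.pow_div_factorial_le_exp (x := T / 2) (by positivity) (L - 1)
    have h2 : (T / 2) ^ (L - 1) = T ^ (L - 1) / 2 ^ (L - 1) := div_pow T 2 (L - 1)
    rw [h2] at h
    have hfacpos : (0 : ℝ) < (Nat.factorial (L - 1) : ℝ) := by linarith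
    have h2pos : (0 : ℝ) < (2 : ℝ) ^ (L - 1) := by positivity
    rw [div_div, div_le_iff₀ (by positivity)] at h
    calc T ^ (L - 1) ≤ Real.exp (T / 2) * (2 ^ (L - 1) * (Nat.factorial (L - 1) : ℝ)) := h
    _ = (Nat.factorial (L - 1) : ℝ) * 2 ^ (L - 1) * Real.exp (T / 2) := by ring
  -- upper crude bound: T ≤ 2 log K + 2 lg
  have hcrude : T ≤ 2 * Real.log K + 2 * lg := by
    have h1 : 1 / (N : ℝ) ≤ K * Real.exp (-(T / 2)) := by
      calc 1 / (N : ℝ) = Real.exp (-T) * S := hq.symm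
      _ ≤ Real.exp (-T) * ((L : ℝ) * ((Nat.factorial (L - 1) : ℝ) * 2 ^ (L - 1) * Real.exp (T / 2))) := by
          refine mul_le_mul_of_nonneg_left ?_ (Real.exp_pos _).le
          calc S ≤ (L : ℝ) * T ^ (L - 1) := hSle
          _ ≤ (L : ℝ) * ((Nat.factorial (L - 1) : ℝ) * 2 ^ (L - 1) * Real.exp (T / 2)) :=
              mul_le_mul_of_nonneg_left hTpow hLrpos.le
      _ = K * (Real.exp (-T) * Real.exp (T / 2)) := by rw [hKdef]; ring
      _ = K * Real.exp (-(T / 2)) := by rw [← Real.exp_add]; ring_nf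
    have h2 : Real.exp (T / 2) ≤ K * (N : ℝ) := by
      rw [Real.exp_neg] at h1
      have h3 : Real.exp (T / 2) * (1 / (N : ℝ)) ≤ K := by
        rw [mul_comm] at h1
        calc Real.exp (T / 2) * (1 / (N : ℝ))
            ≤ Real.exp (T / 2) * ((Real.exp (T / 2))⁻¹ * K) :=
              mul_le_mul_of_nonneg_left h1 (Real.exp_pos _).le
        _ = K := by field_simp
      have := mul_le_mul_of_nonneg_right h3 hNpos.le
      rw [mul_assoc, one_div, inv_mul_cancel₀ hNpos.ne'] at this
      simpa using this
    have h4 : T / 2 ≤ Real.log (K * (N : ℝ)) := by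
      rw [Real.le_log_iff_exp_le (by positivity)]
      exact h2
    rw [Real.log_mul (by linarith) hNpos.ne'] at h4
    linarith
  -- T ≤ lg^2
  have hTlgsq : T ≤ lg ^ 2 := by nlinarith
  -- log T ≤ 2 ll
  have hlogT : Real.log T ≤ 2 * ll := by
    calc Real.log T ≤ Real.log (lg ^ 2) := Real.log_le_log hTpos hTlgsq
    _ = 2 * ll := by rw [Real.log_pow]; push_cast; ring
  have hlogTnn : 0 ≤ Real.log T := Real.log_nonneg hT1
  -- refined upper bound: T ≤ lg + (2L - 1) ll
  have hup : T ≤ lg + (2 * (L : ℝ) - 1) * ll := by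
    have h1 : 1 / (N : ℝ) ≤ Real.exp (-T) * ((L : ℝ) * T ^ (L - 1)) := by
      rw [← hq]
      exact mul_le_mul_of_nonneg_left hSle (Real.exp_pos _).le
    have h2 : Real.exp T ≤ (N : ℝ) * ((L : ℝ) * T ^ (L - 1)) := by
      have h3 : Real.exp T * (1 / (N : ℝ)) ≤ Real.exp T * (Real.exp (-T) * ((L : ℝ) * T ^ (L - 1))) :=
        mul_le_mul_of_nonneg_left h1 (Real.exp_pos _).le
      rw [← mul_assoc, ← Real.exp_add] at h3
      simp only [add_neg_cancel, Real.exp_zero, one_mul] at h3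
      have := mul_le_mul_of_nonneg_right h3 hNpos.le
      rw [mul_assoc, one_div, inv_mul_cancel₀ hNpos.ne', mul_one] at this
      linarith [this]
    have h4 : T ≤ Real.log ((N : ℝ) * ((L : ℝ) * T ^ (L - 1))) := by
      have := Real.log_le_log (Real.exp_pos T) h2
      rwa [Real.log_exp] at this
    have h5 : Real.log ((N : ℝ) * ((L : ℝ) * T ^ (L - 1)))
        = lg + (Real.log L + ((L : ℝ) - 1) * Real.log T) := by
      rw [Real.log_mul hNpos.ne' (by positivity), Real.log_mul hLrpos.ne' (by positivity),
        Real.log_pow]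
      have : ((L - 1 : ℕ) : ℝ) = (L : ℝ) - 1 := by
        push_cast [Nat.cast_sub hL]; ring
      rw [this, hlgdef]
    rw [h5] at h4
    have hL1 : (0 : ℝ) ≤ (L : ℝ) - 1 := by linarith
    nlinarith [mul_le_mul_of_nonneg_left hlogT hL1]
  -- conclude
  have haN : a N = T / (L : ℝ) := by
    rw [hTdef]; field_simp
  rw [haN, div_sub_div_same, abs_div, abs_of_pos hLrpos, div_le_iff₀ hLrpos]
  have hub : T - (lg + ((L : ℝ) - 1) * ll) ≤ (L : ℝ) * ll := by nlinarith
  have hlb : -((L : ℝ) * ll) ≤ T - (lg + ((L : ℝ) - 1) * ll) := by nlinarith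
  have habs : |T - (lg + ((L : ℝ) - 1) * ll)| ≤ (L : ℝ) * ll := abs_le.mpr ⟨hlb, hub⟩
  calc |T - (lg + ((L : ℝ) - 1) * ll)| ≤ (L : ℝ) * ll := habs
  _ ≤ 2 * (L : ℝ) * ll * (L : ℝ) := by nlinarith [mul_nonneg (mul_nonneg hLrpos.le hllpos.le) (by linarith : (0:ℝ) ≤ 2 * (L : ℝ) - 1)]
end
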